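/- arXiv:1709.01880 — 6 statements merged into one kernel-verified Lean document; each statement's English description precedes it below -/
import Mathlib

section
/- Let a < b be real numbers and let u : [a,b] → ℝ be continuously differentiable. If u(c₀) = 0 for some c₀ ∈ [a,b], then ∫_a^b u(x)² dx ≤ ((b−a)²/2)·∫_a^b u′(x)² dx. -/
/-! Writing `u x = ∫ t in c₀..x, u' t`, Cauchy–Schwarz gives the pointwise bound
`u x ^ 2 ≤ |x - c₀| * ∫ t in a..b, u' t ^ 2`. Integrating it over `[a, b]` produces the factor
`∫ x in a..b, |x - c₀| = ((c₀ - a) ^ 2 + (b - c₀) ^ 2) / 2 ≤ (b - a) ^ 2 / 2`. -/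

open Set intervalIntegral MeasureTheory
open scoped Interval

lemma sq_setIntegral_le_measureReal_mul {α : Type*} [MeasurableSpace α] {μ : Measure α}
    {s : Set α} {f : α → ℝ} (hs : μ s ≠ ⊤) (hf : IntegrableOn f s μ)
    (hf2 : IntegrableOn (fun x ↦ f x ^ 2) s μ) :
    (∫ x in s, f x ∂μ) ^ 2 ≤ μ.real s * ∫ x in s, f x ^ 2 ∂μ := by
  by_cases h0 : μ s = 0
  · simp [setIntegral_measure_zero _ h0, measureReal_def, h0]
  have hpos : 0 < μ.real s := ENNReal.toReal_pos h0 hs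
  have jensen := even_two.convexOn_pow.map_set_average_le (continuousOn_pow 2) isClosed_univ
    h0 hs (by simp) hf hf2
  rw [setAverage_eq, setAverage_eq, smul_eq_mul, smul_eq_mul, mul_pow, inv_pow,
    ← div_eq_inv_mul, ← div_eq_inv_mul, div_le_div_iff₀ (by positivity) hpos] at jensen
  nlinarith

lemma sq_integral_le_abs_mul_integral_sq {f : ℝ → ℝ} {a b c d : ℝ}
    (hf : ContinuousOn f (Icc a b)) (hc : c ∈ Icc a b) (hd : d ∈ Icc a b) :
    (∫ x in c..d, f x) ^ 2 ≤ |d - c| * ∫ x in a..b, f x ^ 2 := by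
  have hsub : Ι c d ⊆ Ioc a b := fun x hx ↦
    ⟨(le_min hc.1 hd.1).trans_lt hx.1, hx.2.trans (max_le hc.2 hd.2)⟩
  have hf2 : IntegrableOn (fun x ↦ f x ^ 2) (Ioc a b) :=
    (hf.pow 2).integrableOn_Icc.mono_set Ioc_subset_Icc_self
  calc (∫ x in c..d, f x) ^ 2 = (∫ x in Ι c d, f x) ^ 2 := by
        rw [← sq_abs, abs_integral_eq_abs_integral_uIoc, sq_abs]
    _ ≤ volume.real (Ι c d) * ∫ x in Ι c d, f x ^ 2 :=
        sq_setIntegral_le_measureReal_mul (by simp)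
          (hf.integrableOn_Icc.mono_set (hsub.trans Ioc_subset_Icc_self)) (hf2.mono_set hsub)
    _ ≤ |d - c| * ∫ x in Ioc a b, f x ^ 2 := by
        rw [measureReal_def, Real.volume_uIoc, ENNReal.toReal_ofReal (abs_nonneg _)]
        exact mul_le_mul_of_nonneg_left
          (setIntegral_mono_set hf2 (.of_forall fun x ↦ sq_nonneg _) hsub.eventuallyLE)
          (abs_nonneg _)
    _ = |d - c| * ∫ x in a..b, f x ^ 2 := by
        rw [integral_of_le (hc.1.trans hc.2)]

lemma integral_abs_of_nonpos_of_nonneg {α β : ℝ} (hα : α ≤ 0) (hβ : 0 ≤ β) :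
    ∫ x in α..β, |x| = (α ^ 2 + β ^ 2) / 2 := by
  have hneg : ∫ x in α..0, |x| = ∫ x in α..0, -x :=
    integral_congr fun x hx ↦ abs_of_nonpos (by rw [uIcc_of_le hα] at hx; exact hx.2)
  have hpos : ∫ x in (0 : ℝ)..β, |x| = ∫ x in (0 : ℝ)..β, x :=
    integral_congr fun x hx ↦ abs_of_nonneg (by rw [uIcc_of_le hβ] at hx; exact hx.1)
  rw [← integral_add_adjacent_intervals (b := 0) (continuous_abs.intervalIntegrable _ _)
    (continuous_abs.intervalIntegrable _ _), hneg, hpos, intervalIntegral.integral_neg,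
    integral_id, integral_id]
  ring

lemma integral_abs_sub_le {a b c : ℝ} (hc : c ∈ Icc a b) :
    ∫ x in a..b, |x - c| ≤ (b - a) ^ 2 / 2 := by
  rw [integral_comp_sub_right (fun x ↦ |x|),
    integral_abs_of_nonpos_of_nonneg (by linarith [hc.1]) (by linarith [hc.2])]
  nlinarith [hc.1, hc.2]

lemma integral_eq_sub_of_hasDerivWithinAt_Icc {u u' : ℝ → ℝ} {a b c d : ℝ}
    (hderiv : ∀ x ∈ Icc a b, HasDerivWithinAt u (u' x) (Icc a b) x)
    (hc : c ∈ Icc a b) (hd : d ∈ Icc a b) (hint : IntervalIntegrable u' volume c d) :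
    ∫ x in c..d, u' x = u d - u c := by
  have hsub : [[c, d]] ⊆ Icc a b := uIcc_subset_Icc hc hd
  refine integral_eq_sub_of_hasDeriv_right
    (fun x hx ↦ (hderiv x (hsub hx)).continuousWithinAt.mono hsub) (fun x hx ↦ ?_) hint
  have hx' : x ∈ Ioo a b :=
    ⟨(le_min hc.1 hd.1).trans_lt hx.1, hx.2.trans_le (max_le hc.2 hd.2)⟩
  exact ((hderiv x (Ioo_subset_Icc_self hx')).hasDerivAt
    (Icc_mem_nhds hx'.1 hx'.2)).hasDerivWithinAt

theorem stmt_2_general (a b : ℝ) (u u' : ℝ → ℝ)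
    (hderiv : ∀ x ∈ Icc a b, HasDerivWithinAt u (u' x) (Icc a b) x)
    (hcont : ContinuousOn u' (Icc a b))
    (hzero : ∃ c₀ ∈ Icc a b, u c₀ = 0) :
    (∫ x in a..b, (u x) ^ 2) ≤ ((b - a) ^ 2 / 2) * (∫ x in a..b, (u' x) ^ 2) := by
  obtain ⟨c₀, hc₀, hu₀⟩ := hzero
  have hab : a ≤ b := hc₀.1.trans hc₀.2
  set E := ∫ x in a..b, u' x ^ 2
  have hpointwise : ∀ x ∈ Icc a b, u x ^ 2 ≤ |x - c₀| * E := by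
    intro x hx
    rw [← sub_zero (u x), ← hu₀, ← integral_eq_sub_of_hasDerivWithinAt_Icc hderiv hc₀ hx
      (hcont.mono (uIcc_subset_Icc hc₀ hx)).intervalIntegrable]
    exact sq_integral_le_abs_mul_integral_sq hcont hc₀ hx
  have hucont : ContinuousOn u (Icc a b) := fun x hx ↦ (hderiv x hx).continuousWithinAt
  calc ∫ x in a..b, u x ^ 2 ≤ ∫ x in a..b, |x - c₀| * E :=
        integral_mono_on hab ((hucont.pow 2).intervalIntegrable_of_Icc hab)
          (((continuous_abs.comp (continuous_sub_right c₀)).intervalIntegrable _ _).mul_const _)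
          hpointwise
    _ = (∫ x in a..b, |x - c₀|) * E := integral_mul_const _ _
    _ ≤ (b - a) ^ 2 / 2 * E :=
        mul_le_mul_of_nonneg_right (integral_abs_sub_le hc₀)
          (integral_nonneg hab fun _ _ ↦ sq_nonneg _)

theorem stmt_2 (a b : ℝ) (hab : a < b) (u u' : ℝ → ℝ)
    (hderiv : ∀ x ∈ Icc a b, HasDerivWithinAt u (u' x) (Icc a b) x)
    (hcont : ContinuousOn u' (Icc a b))
    (hzero : ∃ c₀ ∈ Icc a b, u c₀ = 0) :
    (∫ x in a..b, (u x) ^ 2) ≤ ((b - a) ^ 2 / 2) * (∫ x in a..b, (u' x) ^ 2) :=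
  stmt_2_general a b u u' hderiv hcont hzero
end

section
/- Let u : [0,1] → ℝ be continuously differentiable. Then u(0)² − 2·∫_0^1 u(x)² dx ≤ ∫_0^1 u′(x)² dx, and ∫_0^1 u(x)² dx − 2·u(1)² ≤ ∫_0^1 u′(x)² dx. -/
/-!
Both inequalities come from integrating `(w u²)' = w' u² + 2 w u u'` over `[0, 1]` for a
suitable weight `w`. With `w x = x - 1` the boundary term is `u(0)²`, and `|w| ≤ 1` lets
`2 w u u'` be absorbed into `u² + u'²`. With `w = tan`, which solves the Riccati equation
`w' = 1 + w²`, completing the square gives `w' u² + 2 w u u' ≥ u² - u'²`, so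
`∫ (u² - u'²) ≤ tan 1 · u(1)² ≤ 2 u(1)²`.
-/

open Set intervalIntegral

section WeightedEnergy

variable {a b : ℝ} {u u' w w' : ℝ → ℝ}

theorem integral_eq_sub_of_hasDerivWithinAt_Icc_s6 {f f' : ℝ → ℝ} (hab : a ≤ b)
    (hf : ∀ x ∈ Icc a b, HasDerivWithinAt f (f' x) (Icc a b) x)
    (hint : IntervalIntegrable f' MeasureTheory.volume a b) :
    ∫ x in a..b, f' x = f b - f a :=
  integral_eq_sub_of_hasDeriv_right_of_le hab (fun x hx => (hf x hx).continuousWithinAt)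
    (fun x hx => (hf x (Ioo_subset_Icc_self hx)).mono_of_mem_nhdsWithin
      (Icc_mem_nhdsGT_of_mem ⟨hx.1.le, hx.2⟩)) hint

theorem intervalIntegrable_deriv_mul_sq_add_mul_deriv_sq (hab : a ≤ b)
    (hu : ∀ x ∈ Icc a b, HasDerivWithinAt u (u' x) (Icc a b) x)
    (hw : ∀ x ∈ Icc a b, HasDerivWithinAt w (w' x) (Icc a b) x)
    (hu' : ContinuousOn u' (Icc a b)) (hw' : ContinuousOn w' (Icc a b)) :
    IntervalIntegrable (fun x => w' x * u x ^ 2 + w x * (2 * u x * u' x))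
      MeasureTheory.volume a b := by
  have hu_cont : ContinuousOn u (Icc a b) := fun x hx => (hu x hx).continuousWithinAt
  have hw_cont : ContinuousOn w (Icc a b) := fun x hx => (hw x hx).continuousWithinAt
  exact ((hw'.mul (hu_cont.pow 2)).add
    (hw_cont.mul ((continuousOn_const.mul hu_cont).mul hu'))).intervalIntegrable_of_Icc hab

theorem integral_deriv_mul_sq_add_mul_deriv_sq (hab : a ≤ b)
    (hu : ∀ x ∈ Icc a b, HasDerivWithinAt u (u' x) (Icc a b) x)
    (hw : ∀ x ∈ Icc a b, HasDerivWithinAt w (w' x) (Icc a b) x)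
    (hu' : ContinuousOn u' (Icc a b)) (hw' : ContinuousOn w' (Icc a b)) :
    ∫ x in a..b, (w' x * u x ^ 2 + w x * (2 * u x * u' x)) = w b * u b ^ 2 - w a * u a ^ 2 :=
  integral_eq_sub_of_hasDerivWithinAt_Icc_s6 (f := w * u ^ 2) hab
    (fun x hx => ((hw x hx).mul ((hu x hx).pow 2)).congr_deriv (by rw [Pi.pow_apply]; ring))
    (intervalIntegrable_deriv_mul_sq_add_mul_deriv_sq hab hu hw hu' hw')

theorem integral_sq_sub_sq_deriv_le_of_riccati (hab : a ≤ b)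
    (hu : ∀ x ∈ Icc a b, HasDerivWithinAt u (u' x) (Icc a b) x)
    (hw : ∀ x ∈ Icc a b, HasDerivWithinAt w (w' x) (Icc a b) x)
    (hu' : ContinuousOn u' (Icc a b)) (hw' : ContinuousOn w' (Icc a b))
    (hriccati : ∀ x ∈ Icc a b, 1 + w x ^ 2 ≤ w' x) :
    ∫ x in a..b, (u x ^ 2 - u' x ^ 2) ≤ w b * u b ^ 2 - w a * u a ^ 2 := by
  have hu_cont : ContinuousOn u (Icc a b) := fun x hx => (hu x hx).continuousWithinAt
  rw [← integral_deriv_mul_sq_add_mul_deriv_sq hab hu hw hu' hw']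
  refine integral_mono_on hab (((hu_cont.pow 2).sub (hu'.pow 2)).intervalIntegrable_of_Icc hab)
    (intervalIntegrable_deriv_mul_sq_add_mul_deriv_sq hab hu hw hu' hw') fun x hx => ?_
  nlinarith [hriccati x hx, sq_nonneg (u x), sq_nonneg (w x * u x + u' x)]

end WeightedEnergy

theorem sq_zero_le_integral_two_mul_sq_add_sq_deriv {u u' : ℝ → ℝ}
    (hu : ∀ x ∈ Icc (0:ℝ) 1, HasDerivWithinAt u (u' x) (Icc 0 1) x)
    (hu' : ContinuousOn u' (Icc (0:ℝ) 1)) :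
    u 0 ^ 2 ≤ ∫ x in (0:ℝ)..1, (2 * u x ^ 2 + u' x ^ 2) := by
  have hu_cont : ContinuousOn u (Icc (0:ℝ) 1) := fun x hx => (hu x hx).continuousWithinAt
  have hw : ∀ x ∈ Icc (0:ℝ) 1, HasDerivWithinAt (fun x => x - 1) 1 (Icc 0 1) x :=
    fun x _ => (hasDerivWithinAt_id x _).sub_const 1
  have hboundary : ∫ x in (0:ℝ)..1, (1 * u x ^ 2 + (x - 1) * (2 * u x * u' x)) = u 0 ^ 2 :=
    (integral_deriv_mul_sq_add_mul_deriv_sq zero_le_one hu hw hu' continuousOn_const).trans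
      (by ring)
  rw [← hboundary]
  refine integral_mono_on zero_le_one
    (intervalIntegrable_deriv_mul_sq_add_mul_deriv_sq zero_le_one hu hw hu' continuousOn_const)
    (((continuousOn_const.mul (hu_cont.pow 2)).add (hu'.pow 2)).intervalIntegrable_of_Icc
      zero_le_one) fun x hx => ?_
  nlinarith [mul_nonneg (sub_nonneg.2 hx.2) (sq_nonneg (u x + u' x)),
    mul_nonneg hx.1 (add_nonneg (sq_nonneg (u x)) (sq_nonneg (u' x)))]

theorem Real.cos_ne_zero_of_mem_Icc_zero_one {x : ℝ} (hx : x ∈ Icc (0:ℝ) 1) : Real.cos x ≠ 0 :=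
  (Real.cos_pos_of_mem_Ioo
    ⟨by linarith [hx.1, Real.pi_pos], by linarith [hx.2, Real.pi_gt_three]⟩).ne'

theorem Real.hasDerivAt_tan_one_add_tan_sq {x : ℝ} (hx : Real.cos x ≠ 0) :
    HasDerivAt Real.tan (1 + Real.tan x ^ 2) x := by
  convert Real.hasDerivAt_tan hx using 1
  rw [one_div, ← Real.inv_one_add_tan_sq hx, inv_inv]

theorem Real.tan_one_le_two : Real.tan 1 ≤ 2 := by
  have hcos : 1 / 2 ≤ Real.cos 1 := by
    have := Real.one_sub_sq_div_two_le_cos (x := 1)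
    norm_num at this ⊢
    linarith
  rw [Real.tan_eq_sin_div_cos, div_le_iff₀ (by linarith)]
  linarith [Real.sin_le_one 1]

theorem integral_sq_sub_sq_deriv_le_two_mul_sq_one {u u' : ℝ → ℝ}
    (hu : ∀ x ∈ Icc (0:ℝ) 1, HasDerivWithinAt u (u' x) (Icc 0 1) x)
    (hu' : ContinuousOn u' (Icc (0:ℝ) 1)) :
    ∫ x in (0:ℝ)..1, (u x ^ 2 - u' x ^ 2) ≤ 2 * u 1 ^ 2 := by
  have htan : ∀ x ∈ Icc (0:ℝ) 1, HasDerivAt Real.tan (1 + Real.tan x ^ 2) x :=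
    fun x hx => Real.hasDerivAt_tan_one_add_tan_sq (Real.cos_ne_zero_of_mem_Icc_zero_one hx)
  have htan_cont : ContinuousOn Real.tan (Icc (0:ℝ) 1) :=
    fun x hx => (htan x hx).continuousAt.continuousWithinAt
  have h := integral_sq_sub_sq_deriv_le_of_riccati zero_le_one hu
    (fun x hx => (htan x hx).hasDerivWithinAt) hu' (continuousOn_const.add (htan_cont.pow 2))
    (fun _ _ => le_rfl)
  rw [Real.tan_zero, zero_mul, sub_zero] at h
  exact h.trans (mul_le_mul_of_nonneg_right Real.tan_one_le_two (sq_nonneg _))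

theorem stmt_6 (u u' : ℝ → ℝ)
    (hderiv : ∀ x ∈ Icc (0:ℝ) 1, HasDerivWithinAt u (u' x) (Icc 0 1) x)
    (hcont : ContinuousOn u' (Icc (0:ℝ) 1)) :
    (u 0) ^ 2 - 2 * (∫ x in (0:ℝ)..1, (u x) ^ 2) ≤ (∫ x in (0:ℝ)..1, (u' x) ^ 2) ∧
    (∫ x in (0:ℝ)..1, (u x) ^ 2) - 2 * (u 1) ^ 2 ≤ (∫ x in (0:ℝ)..1, (u' x) ^ 2) := by
  have hu_cont : ContinuousOn u (Icc (0:ℝ) 1) := fun x hx => (hderiv x hx).continuousWithinAt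
  have hu_sq : IntervalIntegrable (fun x => u x ^ 2) MeasureTheory.volume 0 1 :=
    (hu_cont.pow 2).intervalIntegrable_of_Icc zero_le_one
  have hu'_sq : IntervalIntegrable (fun x => u' x ^ 2) MeasureTheory.volume 0 1 :=
    (hcont.pow 2).intervalIntegrable_of_Icc zero_le_one
  have h₀ := sq_zero_le_integral_two_mul_sq_add_sq_deriv hderiv hcont
  have h₁ := integral_sq_sub_sq_deriv_le_two_mul_sq_one hderiv hcont
  rw [integral_add (hu_sq.const_mul 2) hu'_sq, integral_const_mul] at h₀
  rw [integral_sub hu_sq hu'_sq] at h₁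
  constructor <;> linarith
end

section
/- Let u : [0,1] → ℝ be twice continuously differentiable, let a₁ ∈ ℝ and a₂ ≠ 0 with a₁/a₂ ≥ −1/2. If u(0) = 0 and a₁·u(1) + a₂·u′(1) = 0, then ∫_0^1 u″(x)·u(x) dx ≤ 0. -/
/-!
Integrating by parts, `∫₀¹ u″u = u′(1)u(1) − ∫₀¹ u′²`. The Robin condition turns the
boundary term into `−(a₁/a₂) u(1)² ≤ u(1)²/2`, while `u(0) = 0` and Cauchy–Schwarz give
`u(1)² = (∫₀¹ u′)² ≤ ∫₀¹ u′²`, so the integral is at most `−u(1)²/2 ≤ 0`.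
-/

open Set intervalIntegral
open MeasureTheory (volume)

theorem sq_integral_le_mul_integral_sq {f : ℝ → ℝ} {a b : ℝ} (hab : a ≤ b)
    (hf : IntervalIntegrable f volume a b)
    (hf2 : IntervalIntegrable (fun x => f x ^ 2) volume a b) :
    (∫ x in a..b, f x) ^ 2 ≤ (b - a) * ∫ x in a..b, f x ^ 2 := by
  set I := ∫ x in a..b, f x
  set S := ∫ x in a..b, f x ^ 2
  have hexpand :
      (∫ x in a..b, ((b - a) * f x - I) ^ 2) = (b - a) * ((b - a) * S - I ^ 2) := by
    have hsq : ∀ x, ((b - a) * f x - I) ^ 2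
        = (b - a) ^ 2 * f x ^ 2 - (2 * (b - a) * I) * f x + I ^ 2 := fun x => by ring
    simp_rw [hsq]
    rw [integral_add ((hf2.const_mul _).sub (hf.const_mul _)) intervalIntegrable_const,
      integral_sub (hf2.const_mul _) (hf.const_mul _), integral_const_mul, integral_const_mul,
      integral_const, smul_eq_mul]
    ring
  have hnonneg : 0 ≤ (b - a) * ((b - a) * S - I ^ 2) :=
    hexpand ▸ integral_nonneg hab fun x _ => sq_nonneg _
  rcases hab.eq_or_lt with rfl | hlt
  · simp [I]
  · nlinarith [(mul_nonneg_iff_of_pos_left (sub_pos.2 hlt)).1 hnonneg]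

theorem sq_sub_le_mul_integral_deriv_sq {u u' : ℝ → ℝ} {a b : ℝ} (hab : a ≤ b)
    (hu : ∀ x ∈ Icc a b, HasDerivWithinAt u (u' x) (Icc a b) x)
    (hu' : ContinuousOn u' (Icc a b)) :
    (u b - u a) ^ 2 ≤ (b - a) * ∫ x in a..b, u' x ^ 2 := by
  have hint : IntervalIntegrable u' volume a b :=
    (hu'.mono (uIcc_of_le hab).subset).intervalIntegrable
  have hftc : (∫ x in a..b, u' x) = u b - u a :=
    integral_eq_sub_of_hasDerivAt_of_le hab (fun x hx => (hu x hx).continuousWithinAt)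
      (fun x hx => (hu x (Ioo_subset_Icc_self hx)).hasDerivAt (Icc_mem_nhds hx.1 hx.2)) hint
  rw [← hftc]
  exact sq_integral_le_mul_integral_sq hab hint
    ((hu'.pow 2).mono (uIcc_of_le hab).subset).intervalIntegrable

theorem integral_deriv2_mul_eq {u u' u'' : ℝ → ℝ} {a b : ℝ} (hab : a ≤ b)
    (hu : ∀ x ∈ Icc a b, HasDerivWithinAt u (u' x) (Icc a b) x)
    (hu' : ∀ x ∈ Icc a b, HasDerivWithinAt u' (u'' x) (Icc a b) x)
    (hu'' : IntervalIntegrable u'' volume a b) :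
    ∫ x in a..b, u'' x * u x = u' b * u b - u' a * u a - ∫ x in a..b, u' x ^ 2 := by
  have hcont : ContinuousOn u' (Icc a b) := fun x hx => (hu' x hx).continuousWithinAt
  have hint : IntervalIntegrable u' volume a b :=
    (hcont.mono (uIcc_of_le hab).subset).intervalIntegrable
  have hibp := integral_mul_deriv_eq_deriv_mul_of_hasDerivWithinAt
    (by rwa [uIcc_of_le hab]) (by rwa [uIcc_of_le hab]) hu'' hint
  simp only [← sq] at hibp
  linarith

theorem mul_le_half_sq_of_robin {a₁ a₂ p q : ℝ} (ha₂ : a₂ ≠ 0) (hratio : a₁ / a₂ ≥ -(1 / 2))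
    (hbc : a₁ * p + a₂ * q = 0) : q * p ≤ p ^ 2 / 2 := by
  have hq : q = -(a₁ / a₂) * p := by
    field_simp
    linarith
  rw [hq]
  nlinarith [sq_nonneg p]

theorem stmt_7 (u u' u'' : ℝ → ℝ) (a₁ a₂ : ℝ) (ha₂ : a₂ ≠ 0)
    (hratio : a₁ / a₂ ≥ -(1 / 2))
    (hderiv : ∀ x ∈ Icc (0:ℝ) 1, HasDerivWithinAt u (u' x) (Icc 0 1) x)
    (hderiv' : ∀ x ∈ Icc (0:ℝ) 1, HasDerivWithinAt u' (u'' x) (Icc 0 1) x)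
    (hcont : ContinuousOn u'' (Icc (0:ℝ) 1))
    (hbc0 : u 0 = 0) (hbc1 : a₁ * u 1 + a₂ * u' 1 = 0) :
    (∫ x in (0:ℝ)..1, u'' x * u x) ≤ 0 := by
  have h01 : (0:ℝ) ≤ 1 := zero_le_one
  have henergy := integral_deriv2_mul_eq h01 hderiv hderiv'
    (hcont.mono (uIcc_of_le h01).subset).intervalIntegrable
  have hpoincare := sq_sub_le_mul_integral_deriv_sq h01 hderiv
    fun x hx => (hderiv' x hx).continuousWithinAt
  have hboundary := mul_le_half_sq_of_robin ha₂ hratio hbc1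
  rw [hbc0] at henergy hpoincare
  linarith [sq_nonneg (u 1)]
end

section
/- Under Assumption A3a (a₂ ≠ 0; there exist A′₁, A′₂ ≥ 0 with A′₁ + A′₂ = μ such that −(a₁/a₂)μ + M₂/2 ≤ −2A′₂, (b₁/b₂)μ − M₂/2 < A′₁, and M₁ < A′₂ − 2A′₁), there exist constants C₃, C₄, C₅ > 0 such that every classical solution u of the boundary-value problem satisfies, for all t ≥ 0: ‖u(t,·)‖² ≤ ‖u(0,·)‖²·e^{−C₃t} + C₄·∫_0^t d₁(s)² ds + C₅·∫_0^t d₂(s)² ds, and ‖u(t,·)‖² ≤ ‖u(0,·)‖²·e^{−C₃t} + (1 − e^{−C₃t})·(C₄·sup_{0≤s≤t} d₁(s)² + C₅·sup_{0≤s≤t} d₂(s)²). -/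
open Set intervalIntegral Real
open MeasureTheory (volume)

/-!
Energy method for `E(t) = ‖u(t)‖²`. Integrating `E' = 2∫ u u_t` by parts and inserting the
boundary conditions leaves boundary terms in `u(1)²`, `u(0)²`, `u(0) d₁` and the dissipation
`-2μ‖u_x‖²`. Splitting `μ = A₁' + A₂'`, the parts `A₂'‖u_x‖²` and `A₁'‖u_x‖²` are spent on the
inequalities `‖u‖² ≤ 2u(1)² + ‖u_x‖²` and `u(0)² ≤ 2‖u‖² + ‖u_x‖²` (Cauchy–Schwarz on
`u(y) - u(x) = ∫ u_x`). Assumption A3a makes the resulting coefficients of `u(1)²`, `u(0)²` and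
`‖u‖²` nonpositive, negative and negative; completing the square in `u(0)` and Young's inequality
absorb `d₁` and `d₂`, giving `E' ≤ -C₃ E + C d₁² + C' d₂²`. The integrating factor `e^{C₃ t}`
then yields both bounds.
-/

theorem integral_eq_sub_of_hasDerivWithinAt_Icc_s14 {F F' : ℝ → ℝ} {a b : ℝ} (hab : a ≤ b)
    (hF : ∀ x ∈ Icc a b, HasDerivWithinAt F (F' x) (Icc a b) x)
    (hF' : ContinuousOn F' (Icc a b)) : ∫ x in a..b, F' x = F b - F a :=
  integral_eq_sub_of_hasDeriv_right_of_le hab (fun x hx => (hF x hx).continuousWithinAt)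
    (fun x hx => ((hF x (Ioo_subset_Icc_self hx)).hasDerivAt
      (Icc_mem_nhds hx.1 hx.2)).hasDerivWithinAt)
    (hF'.intervalIntegrable_of_Icc hab)

theorem sq_integral_le_mul_integral_sq_s14 {g : ℝ → ℝ} {a b : ℝ} (hab : a ≤ b)
    (hg : ContinuousOn g (Icc a b)) :
    (∫ s in a..b, g s) ^ 2 ≤ (b - a) * ∫ s in a..b, g s ^ 2 := by
  have hgi : IntervalIntegrable g volume a b := hg.intervalIntegrable_of_Icc hab
  have hg2i : IntervalIntegrable (fun s => g s ^ 2) volume a b :=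
    (hg.pow 2).intervalIntegrable_of_Icc hab
  have hquad : ∀ c : ℝ, 0 ≤ (b - a) * (c * c) + (-2 * ∫ s in a..b, g s) * c
      + ∫ s in a..b, g s ^ 2 := fun c => by
    have h : 0 ≤ ∫ s in a..b, (g s - c) ^ 2 := integral_nonneg hab fun s _ => sq_nonneg _
    simp only [sub_sq] at h
    rw [integral_add (hg2i.sub ((hgi.const_mul 2).mul_const c)) intervalIntegrable_const,
      integral_sub hg2i ((hgi.const_mul 2).mul_const c), integral_mul_const,
      integral_const_mul, integral_const, smul_eq_mul] at h
    linarith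
  have := discrim_le_zero hquad
  rw [discrim] at this
  linarith

theorem sq_sub_le_mul_integral_deriv_sq_s14 {U U' : ℝ → ℝ} {a b x y : ℝ}
    (hU : ∀ z ∈ Icc a b, HasDerivWithinAt U (U' z) (Icc a b) z)
    (hU' : ContinuousOn U' (Icc a b)) (hax : a ≤ x) (hxy : x ≤ y) (hyb : y ≤ b) :
    (U y - U x) ^ 2 ≤ (y - x) * ∫ z in a..b, U' z ^ 2 := by
  have hsub : Icc x y ⊆ Icc a b := Icc_subset_Icc hax hyb
  have hftc : ∫ z in x..y, U' z = U y - U x :=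
    integral_eq_sub_of_hasDerivWithinAt_Icc_s14 hxy (fun z hz => (hU z (hsub hz)).mono hsub)
      (hU'.mono hsub)
  calc (U y - U x) ^ 2 = (∫ z in x..y, U' z) ^ 2 := by rw [hftc]
    _ ≤ (y - x) * ∫ z in x..y, U' z ^ 2 := sq_integral_le_mul_integral_sq_s14 hxy (hU'.mono hsub)
    _ ≤ (y - x) * ∫ z in a..b, U' z ^ 2 := by
      gcongr
      exact integral_mono_interval hax hxy hyb (Filter.Eventually.of_forall fun z => sq_nonneg _)
        ((hU'.pow 2).intervalIntegrable_of_Icc (hax.trans (hxy.trans hyb)))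

theorem integral_sq_le_sq_one_add_integral_deriv_sq {U U' : ℝ → ℝ}
    (hU : ∀ x ∈ Icc (0:ℝ) 1, HasDerivWithinAt U (U' x) (Icc 0 1) x)
    (hU' : ContinuousOn U' (Icc 0 1)) :
    ∫ x in (0:ℝ)..1, U x ^ 2 ≤ 2 * U 1 ^ 2 + ∫ x in (0:ℝ)..1, U' x ^ 2 := by
  set K := ∫ x in (0:ℝ)..1, U' x ^ 2
  have hUc : ContinuousOn U (Icc 0 1) := fun x hx => (hU x hx).continuousWithinAt
  have hpt : ∀ x ∈ Icc (0:ℝ) 1, U x ^ 2 ≤ 2 * U 1 ^ 2 + 2 * K * (1 - x) := fun x hx => by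
    have := sq_sub_le_mul_integral_deriv_sq_s14 hU hU' hx.1 hx.2 le_rfl
    nlinarith [sq_nonneg (2 * U 1 - U x)]
  calc ∫ x in (0:ℝ)..1, U x ^ 2 ≤ ∫ x in (0:ℝ)..1, (2 * U 1 ^ 2 + 2 * K * (1 - x)) :=
        integral_mono_on zero_le_one ((hUc.pow 2).intervalIntegrable_of_Icc zero_le_one)
          (Continuous.intervalIntegrable (by fun_prop) _ _) hpt
    _ = 2 * U 1 ^ 2 + K := by
        rw [integral_add intervalIntegrable_const
            ((intervalIntegrable_const.sub intervalIntegrable_id).const_mul _),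
          integral_const_mul (2 * K), integral_sub intervalIntegrable_const intervalIntegrable_id]
        norm_num
        ring

theorem sq_zero_le_integral_sq_add_integral_deriv_sq {U U' : ℝ → ℝ}
    (hU : ∀ x ∈ Icc (0:ℝ) 1, HasDerivWithinAt U (U' x) (Icc 0 1) x)
    (hU' : ContinuousOn U' (Icc 0 1)) :
    U 0 ^ 2 ≤ 2 * (∫ x in (0:ℝ)..1, U x ^ 2) + ∫ x in (0:ℝ)..1, U' x ^ 2 := by
  set K := ∫ x in (0:ℝ)..1, U' x ^ 2
  have hUc : ContinuousOn U (Icc 0 1) := fun x hx => (hU x hx).continuousWithinAt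
  have hU2 : IntervalIntegrable (fun x => 2 * U x ^ 2) volume 0 1 :=
    ((hUc.pow 2).intervalIntegrable_of_Icc zero_le_one).const_mul 2
  have hpt : ∀ x ∈ Icc (0:ℝ) 1, U 0 ^ 2 ≤ 2 * U x ^ 2 + 2 * K * x := fun x hx => by
    have := sq_sub_le_mul_integral_deriv_sq_s14 hU hU' le_rfl hx.1 hx.2
    nlinarith [sq_nonneg (2 * U x - U 0)]
  calc U 0 ^ 2 = ∫ x in (0:ℝ)..1, U 0 ^ 2 := by simp
    _ ≤ ∫ x in (0:ℝ)..1, (2 * U x ^ 2 + 2 * K * x) :=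
        integral_mono_on zero_le_one intervalIntegrable_const
          (hU2.add (intervalIntegrable_id.const_mul _)) hpt
    _ = 2 * (∫ x in (0:ℝ)..1, U x ^ 2) + K := by
        rw [integral_add hU2 (intervalIntegrable_id.const_mul _), integral_const_mul,
          integral_const_mul]
        norm_num
        ring

theorem energy_identity {U U' U'' f : ℝ → ℝ} (μ M₁ M₂ : ℝ)
    (hU : ∀ x ∈ Icc (0:ℝ) 1, HasDerivWithinAt U (U' x) (Icc 0 1) x)
    (hU' : ∀ x ∈ Icc (0:ℝ) 1, HasDerivWithinAt U' (U'' x) (Icc 0 1) x)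
    (hU'' : ContinuousOn U'' (Icc 0 1)) (hf : ContinuousOn f (Icc 0 1)) :
    ∫ x in (0:ℝ)..1, 2 * U x * (μ * U'' x + f x + M₁ * U x + M₂ * U' x)
      = 2 * μ * (U 1 * U' 1 - U 0 * U' 0) - 2 * μ * (∫ x in (0:ℝ)..1, U' x ^ 2)
        + 2 * (∫ x in (0:ℝ)..1, U x * f x) + 2 * M₁ * (∫ x in (0:ℝ)..1, U x ^ 2)
        + M₂ * (U 1 ^ 2 - U 0 ^ 2) := by
  have hUc : ContinuousOn U (Icc 0 1) := fun x hx => (hU x hx).continuousWithinAt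
  have hU'c : ContinuousOn U' (Icc 0 1) := fun x hx => (hU' x hx).continuousWithinAt
  have hG' : ContinuousOn
      (fun x => 2 * μ * (U' x ^ 2 + U x * U'' x) + M₂ * (2 * U x * U' x)) (Icc 0 1) := by
    fun_prop
  have hbdry : ∫ x in (0:ℝ)..1, (2 * μ * (U' x ^ 2 + U x * U'' x) + M₂ * (2 * U x * U' x))
      = (2 * μ * (U 1 * U' 1) + M₂ * U 1 ^ 2) - (2 * μ * (U 0 * U' 0) + M₂ * U 0 ^ 2) := by
    refine integral_eq_sub_of_hasDerivWithinAt_Icc_s14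
      (F := fun x => 2 * μ * (U x * U' x) + M₂ * U x ^ 2) zero_le_one (fun x hx => ?_) hG'
    exact ((((hU x hx).mul (hU' x hx)).const_mul (2 * μ)).add
      (((hU x hx).pow 2).const_mul M₂)).congr_deriv (by ring)
  have i₁ : IntervalIntegrable (fun x => U' x ^ 2) volume 0 1 :=
    (hU'c.pow 2).intervalIntegrable_of_Icc zero_le_one
  have i₂ : IntervalIntegrable (fun x => U x * f x) volume 0 1 :=
    (hUc.mul hf).intervalIntegrable_of_Icc zero_le_one
  have i₃ : IntervalIntegrable (fun x => U x ^ 2) volume 0 1 :=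
    (hUc.pow 2).intervalIntegrable_of_Icc zero_le_one
  calc ∫ x in (0:ℝ)..1, 2 * U x * (μ * U'' x + f x + M₁ * U x + M₂ * U' x)
      = ∫ x in (0:ℝ)..1, ((2 * μ * (U' x ^ 2 + U x * U'' x) + M₂ * (2 * U x * U' x))
          + (-(2 * μ) * U' x ^ 2 + (2 * (U x * f x) + 2 * M₁ * U x ^ 2))) := by
        congr 1; ext x; ring
    _ = _ := by
        rw [integral_add (hG'.intervalIntegrable_of_Icc zero_le_one)
            ((i₁.const_mul _).add ((i₂.const_mul _).add (i₃.const_mul _))),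
          integral_add (i₁.const_mul _) ((i₂.const_mul _).add (i₃.const_mul _)),
          integral_add (i₂.const_mul _) (i₃.const_mul _), integral_const_mul, integral_const_mul,
          integral_const_mul, hbdry]
        ring

theorem two_mul_integral_mul_le {U f : ℝ → ℝ} {a b D ε : ℝ} (hab : a ≤ b) (hε : 0 < ε)
    (hU : ContinuousOn U (Icc a b)) (hf : ContinuousOn f (Icc a b))
    (hfD : ∀ x ∈ Ioo a b, |f x| ≤ D) :
    2 * ∫ x in a..b, U x * f x ≤ ε * (∫ x in a..b, U x ^ 2) + (b - a) * (D ^ 2 / ε) := by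
  have hU2 : IntervalIntegrable (fun x => ε * U x ^ 2) volume a b :=
    ((hU.pow 2).intervalIntegrable_of_Icc hab).const_mul ε
  rw [← integral_const_mul]
  calc ∫ x in a..b, 2 * (U x * f x) ≤ ∫ x in a..b, (ε * U x ^ 2 + D ^ 2 / ε) := by
        refine integral_mono_on_of_le_Ioo hab
          (((hU.mul hf).intervalIntegrable_of_Icc hab).const_mul 2)
          (hU2.add intervalIntegrable_const) fun x hx => ?_
        have hUf : U x * f x ≤ |U x| * D :=
          (le_abs_self _).trans (by rw [abs_mul]; gcongr; exact hfD x hx)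
        have hyoung : ε * U x ^ 2 + D ^ 2 / ε - 2 * (|U x| * D) = (ε * |U x| - D) ^ 2 / ε := by
          field_simp
          rw [← sq_abs (U x)]
          ring
        linarith [div_nonneg (sq_nonneg (ε * |U x| - D)) hε.le]
    _ = ε * (∫ x in a..b, U x ^ 2) + (b - a) * (D ^ 2 / ε) := by
        rw [integral_add hU2 intervalIntegrable_const, integral_const_mul, integral_const,
          smul_eq_mul]

theorem energy_derivative_le {U U' U'' f : ℝ → ℝ}
    {μ a₁ a₂ b₁ b₂ M₁ M₂ A₁ A₂ δ η g D : ℝ} (ha₂ : a₂ ≠ 0) (hb₂ : b₂ ≠ 0)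
    (hA₁ : 0 ≤ A₁) (hA₂ : 0 ≤ A₂) (hA : A₁ + A₂ = μ) (ha : -(a₁ / a₂) * μ + M₂ / 2 ≤ -(2 * A₂))
    (hδ : 0 < δ) (hδA : δ ≤ 2 * (A₁ - (b₁ / b₂ * μ - M₂ / 2)))
    (hη : 0 < η) (hηA : η ≤ 2 * (A₂ - 2 * A₁ - M₁))
    (hU : ∀ x ∈ Icc (0:ℝ) 1, HasDerivWithinAt U (U' x) (Icc 0 1) x)
    (hU' : ∀ x ∈ Icc (0:ℝ) 1, HasDerivWithinAt U' (U'' x) (Icc 0 1) x)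
    (hU'' : ContinuousOn U'' (Icc 0 1)) (hf : ContinuousOn f (Icc 0 1))
    (hfD : ∀ x ∈ Ioo (0:ℝ) 1, |f x| ≤ D)
    (hbc₁ : a₁ * U 1 + a₂ * U' 1 = 0) (hbc₀ : b₁ * U 0 + b₂ * U' 0 = g) :
    ∫ x in (0:ℝ)..1, 2 * U x * (μ * U'' x + f x + M₁ * U x + M₂ * U' x)
      ≤ -(η / 2) * (∫ x in (0:ℝ)..1, U x ^ 2) + μ ^ 2 / (δ * b₂ ^ 2) * g ^ 2
        + 2 / η * D ^ 2 := by
  have hUc : ContinuousOn U (Icc 0 1) := fun x hx => (hU x hx).continuousWithinAt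
  have hU'c : ContinuousOn U' (Icc 0 1) := fun x hx => (hU' x hx).continuousWithinAt
  rw [energy_identity μ M₁ M₂ hU hU' hU'' hf]
  set I := ∫ x in (0:ℝ)..1, U x ^ 2
  set K := ∫ x in (0:ℝ)..1, U' x ^ 2
  have hI : 0 ≤ I := integral_nonneg zero_le_one fun x _ => sq_nonneg _
  have hpoinc₁ : I ≤ 2 * U 1 ^ 2 + K := integral_sq_le_sq_one_add_integral_deriv_sq hU hU'c
  have hpoinc₀ : U 0 ^ 2 ≤ 2 * I + K := sq_zero_le_integral_sq_add_integral_deriv_sq hU hU'c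
  have hyoung : 2 * (∫ x in (0:ℝ)..1, U x * f x) ≤ η / 2 * I + 1 * (D ^ 2 / (η / 2)) := by
    simpa using two_mul_integral_mul_le zero_le_one (half_pos hη) hUc hf hfD
  have hU'₁ : U 1 * U' 1 = -(a₁ / a₂) * U 1 ^ 2 := by field_simp; linear_combination U 1 * hbc₁
  have hU'₀ : U 0 * U' 0 = g / b₂ * U 0 - b₁ / b₂ * U 0 ^ 2 := by
    field_simp; linear_combination U 0 * hbc₀
  have hsq : 0 ≤ δ * U 0 ^ 2 + 2 * μ * (g / b₂ * U 0) + μ ^ 2 / (δ * b₂ ^ 2) * g ^ 2 := by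
    rw [show δ * U 0 ^ 2 + 2 * μ * (g / b₂ * U 0) + μ ^ 2 / (δ * b₂ ^ 2) * g ^ 2
        = (δ * U 0 + μ / b₂ * g) ^ 2 / δ by field_simp; ring]
    positivity
  rw [hU'₁, hU'₀]
  linear_combination 2 * mul_le_mul_of_nonneg_right ha (sq_nonneg (U 1))
    + mul_le_mul_of_nonneg_right hδA (sq_nonneg (U 0)) + mul_le_mul_of_nonneg_right hηA hI
    + 2 * mul_le_mul_of_nonneg_left hpoinc₁ hA₂ + 2 * mul_le_mul_of_nonneg_left hpoinc₀ hA₁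
    + hyoung + hsq + 2 * K * hA

theorem le_exp_neg_mul_mul_of_hasDerivAt_le {E E' h : ℝ → ℝ} {c t : ℝ} (ht : 0 ≤ t)
    (hE : ContinuousOn E (Icc 0 t)) (hE' : ∀ s ∈ Ioo 0 t, HasDerivAt E (E' s) s)
    (hle : ∀ s ∈ Ioo 0 t, E' s ≤ -c * E s + h s) (hh : ContinuousOn h (Icc 0 t)) :
    E t ≤ exp (-c * t) * (E 0 + ∫ s in (0:ℝ)..t, exp (c * s) * h s) := by
  have hexp : Continuous fun s => exp (c * s) := by fun_prop
  have hg : ContinuousOn (fun s => exp (c * s) * h s) (Icc 0 t) := hexp.continuousOn.mul hh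
  set F : ℝ → ℝ := fun s => E s * exp (c * s) - ∫ r in (0:ℝ)..s, exp (c * r) * h r
  have hFcont : ContinuousOn F (Icc 0 t) := by
    refine (hE.mul hexp.continuousOn).sub ?_
    simpa only [uIcc_of_le ht] using
      continuousOn_primitive_interval' (hg.intervalIntegrable_of_Icc ht) (by simp [ht])
  have hFderiv : ∀ s ∈ Ioo 0 t, HasDerivAt F
      (E' s * exp (c * s) + E s * (exp (c * s) * c) - exp (c * s) * h s) s := fun s hs =>
    ((hE' s hs).mul (((hasDerivAt_id s).const_mul c).exp.congr_deriv (by simp))).sub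
      (integral_hasDerivAt_right
        ((hg.mono (Icc_subset_Icc le_rfl hs.2.le)).intervalIntegrable_of_Icc hs.1.le)
        ((hg.mono Ioo_subset_Icc_self).stronglyMeasurableAtFilter isOpen_Ioo s hs)
        (hg.continuousAt (Icc_mem_nhds hs.1 hs.2)))
  have hFanti : AntitoneOn F (Icc 0 t) := by
    refine antitoneOn_of_hasDerivWithinAt_nonpos (convex_Icc 0 t) hFcont
      (fun s hs => (hFderiv s (by simpa using hs)).hasDerivWithinAt) fun s hs => ?_
    rw [interior_Icc] at hs
    nlinarith [hle s hs, exp_pos (c * s)]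
  have hFt : F t ≤ E 0 := by
    simpa [F] using hFanti (left_mem_Icc.2 ht) (right_mem_Icc.2 ht) ht
  have : E t = exp (-c * t) * (E t * exp (c * t)) := by
    rw [mul_left_comm, ← exp_add]; simp
  rw [this]
  gcongr
  simp only [F] at hFt
  linarith

theorem le_add_integral_of_hasDerivAt_le {E E' h : ℝ → ℝ} {c t : ℝ} (hc : 0 ≤ c) (ht : 0 ≤ t)
    (hE : ContinuousOn E (Icc 0 t)) (hE' : ∀ s ∈ Ioo 0 t, HasDerivAt E (E' s) s)
    (hle : ∀ s ∈ Ioo 0 t, E' s ≤ -c * E s + h s) (hh : ContinuousOn h (Icc 0 t))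
    (hh₀ : ∀ s ∈ Icc 0 t, 0 ≤ h s) :
    E t ≤ E 0 * exp (-c * t) + ∫ s in (0:ℝ)..t, h s := by
  have hexp : Continuous fun s => exp (c * s) := by fun_prop
  have hdecay : exp (-c * t) * ∫ s in (0:ℝ)..t, exp (c * s) * h s ≤ ∫ s in (0:ℝ)..t, h s := by
    rw [← integral_const_mul]
    refine integral_mono_on ht
      ((hexp.continuousOn.mul hh).const_mul _ |>.intervalIntegrable_of_Icc ht)
      (hh.intervalIntegrable_of_Icc ht) fun s hs => ?_
    rw [← mul_assoc, ← exp_add]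
    exact mul_le_of_le_one_left (hh₀ s hs) (exp_le_one_iff.2 (by nlinarith [hs.2]))
  have := le_exp_neg_mul_mul_of_hasDerivAt_le ht hE hE' hle hh
  linarith

theorem le_add_of_hasDerivAt_le_of_le {E E' h : ℝ → ℝ} {c t S : ℝ} (hc : 0 < c) (ht : 0 ≤ t)
    (hE : ContinuousOn E (Icc 0 t)) (hE' : ∀ s ∈ Ioo 0 t, HasDerivAt E (E' s) s)
    (hle : ∀ s ∈ Ioo 0 t, E' s ≤ -c * E s + h s) (hh : ContinuousOn h (Icc 0 t))
    (hS : ∀ s ∈ Icc 0 t, h s ≤ S) :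
    E t ≤ E 0 * exp (-c * t) + (1 - exp (-c * t)) * (S / c) := by
  have hexp : Continuous fun s => exp (c * s) := by fun_prop
  have hforcing : ∫ s in (0:ℝ)..t, exp (c * s) * h s ≤ (exp (c * t) - 1) / c * S := by
    calc ∫ s in (0:ℝ)..t, exp (c * s) * h s ≤ ∫ s in (0:ℝ)..t, exp (c * s) * S :=
          integral_mono_on ht ((hexp.continuousOn.mul hh).intervalIntegrable_of_Icc ht)
            ((hexp.mul continuous_const).intervalIntegrable _ _)
            fun s hs => mul_le_mul_of_nonneg_left (hS s hs) (exp_pos _).le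
      _ = (exp (c * t) - 1) / c * S := by
          rw [integral_mul_const, integral_comp_mul_left (fun s => exp s) hc.ne', integral_exp]
          simp [div_eq_inv_mul]
  have hcancel : exp (-c * t) * exp (c * t) = 1 := by rw [← exp_add]; simp
  have := le_exp_neg_mul_mul_of_hasDerivAt_le ht hE hE' hle hh
  have := mul_le_mul_of_nonneg_left hforcing (exp_pos (-c * t)).le
  calc E t ≤ exp (-c * t) * (E 0 + (exp (c * t) - 1) / c * S) := by linarith
    _ = E 0 * exp (-c * t) + (1 - exp (-c * t)) * (S / c) := by
        linear_combination (S / c) * hcancel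

/-- The factor `1 + 1 / c` lets one constant serve both bounds, which need `A` and `A / c`. -/
theorem le_of_hasDerivAt_le_add_sq {E E' f₁ f₂ : ℝ → ℝ} {c A B t : ℝ} (hc : 0 < c)
    (hA : 0 ≤ A) (hB : 0 ≤ B) (ht : 0 ≤ t)
    (hE : ContinuousOn E (Ici 0)) (hE' : ∀ s > (0:ℝ), HasDerivAt E (E' s) s)
    (hle : ∀ s > (0:ℝ), E' s ≤ -c * E s + (A * f₁ s ^ 2 + B * f₂ s ^ 2))
    (hf₁ : ContinuousOn f₁ (Ici 0)) (hf₂ : ContinuousOn f₂ (Ici 0)) :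
    (E t ≤ E 0 * exp (-c * t) + A * (1 + 1 / c) * (∫ s in (0:ℝ)..t, f₁ s ^ 2)
        + B * (1 + 1 / c) * (∫ s in (0:ℝ)..t, f₂ s ^ 2)) ∧
      (E t ≤ E 0 * exp (-c * t) + (1 - exp (-c * t)) *
        (A * (1 + 1 / c) * sSup ((fun s => f₁ s ^ 2) '' Icc 0 t)
          + B * (1 + 1 / c) * sSup ((fun s => f₂ s ^ 2) '' Icc 0 t))) := by
  have hEt : ContinuousOn E (Icc 0 t) := hE.mono Icc_subset_Ici_self
  have hE't : ∀ s ∈ Ioo 0 t, HasDerivAt E (E' s) s := fun s hs => hE' s hs.1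
  have hlet := fun s (hs : s ∈ Ioo 0 t) => hle s hs.1
  have hf₁t : ContinuousOn (fun s => f₁ s ^ 2) (Icc 0 t) := (hf₁.mono Icc_subset_Ici_self).pow 2
  have hf₂t : ContinuousOn (fun s => f₂ s ^ 2) (Icc 0 t) := (hf₂.mono Icc_subset_Ici_self).pow 2
  have hh : ContinuousOn (fun s => A * f₁ s ^ 2 + B * f₂ s ^ 2) (Icc 0 t) := by fun_prop
  have hc' : 1 ≤ 1 + 1 / c := by simp [hc.le]
  constructor
  · have hbound := le_add_integral_of_hasDerivAt_le hc.le ht hEt hE't hlet hh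
      fun s _ => by positivity
    rw [integral_add ((hf₁t.intervalIntegrable_of_Icc ht).const_mul A)
      ((hf₂t.intervalIntegrable_of_Icc ht).const_mul B), integral_const_mul,
      integral_const_mul] at hbound
    have h₁ : 0 ≤ ∫ s in (0:ℝ)..t, f₁ s ^ 2 := integral_nonneg ht fun s _ => sq_nonneg _
    have h₂ : 0 ≤ ∫ s in (0:ℝ)..t, f₂ s ^ 2 := integral_nonneg ht fun s _ => sq_nonneg _
    linarith [mul_le_mul_of_nonneg_right (le_mul_of_one_le_right hA hc') h₁,
      mul_le_mul_of_nonneg_right (le_mul_of_one_le_right hB hc') h₂]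
  · set S₁ := sSup ((fun s => f₁ s ^ 2) '' Icc 0 t)
    set S₂ := sSup ((fun s => f₂ s ^ 2) '' Icc 0 t)
    have hS₁ : ∀ s ∈ Icc 0 t, f₁ s ^ 2 ≤ S₁ := fun s hs =>
      le_csSup (isCompact_Icc.image_of_continuousOn hf₁t).bddAbove (mem_image_of_mem _ hs)
    have hS₂ : ∀ s ∈ Icc 0 t, f₂ s ^ 2 ≤ S₂ := fun s hs =>
      le_csSup (isCompact_Icc.image_of_continuousOn hf₂t).bddAbove (mem_image_of_mem _ hs)
    have hS₁₀ : 0 ≤ S₁ := (sq_nonneg _).trans (hS₁ 0 (left_mem_Icc.2 ht))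
    have hS₂₀ : 0 ≤ S₂ := (sq_nonneg _).trans (hS₂ 0 (left_mem_Icc.2 ht))
    have hbound := le_add_of_hasDerivAt_le_of_le hc ht hEt hE't hlet hh fun s hs =>
      add_le_add (mul_le_mul_of_nonneg_left (hS₁ s hs) hA)
        (mul_le_mul_of_nonneg_left (hS₂ s hs) hB)
    have hdecay : 0 ≤ 1 - exp (-c * t) := sub_nonneg.2 (exp_le_one_iff.2 (by nlinarith))
    refine hbound.trans ?_
    gcongr
    calc (A * S₁ + B * S₂) / c ≤ (A * S₁ + B * S₂) + (A * S₁ + B * S₂) / c :=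
          le_add_of_nonneg_left (by positivity)
      _ = A * (1 + 1 / c) * S₁ + B * (1 + 1 / c) * S₂ := by ring

theorem stmt_14
    (μ a₁ a₂ b₁ b₂ M₁ M₂ : ℝ) (d : ℝ → ℝ → ℝ) (d₁ d₂ : ℝ → ℝ)
    (hμ : 0 < μ) (hb₂ : b₂ ≠ 0)
    (hd₁ : ContDiffOn ℝ 2 d₁ (Ici 0)) (hd₂ : ContinuousOn d₂ (Ici 0))
    (hdcont : ContinuousOn (fun p : ℝ × ℝ => d p.1 p.2) (Ici 0 ×ˢ Icc 0 1))
    (hd : ∀ t ≥ (0:ℝ), ∀ x ∈ Ioo (0:ℝ) 1, |d t x| ≤ |d₂ t|)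
    -- Assumption A3a
    (ha₂ : a₂ ≠ 0)
    (hA' : ∃ A₁' A₂' : ℝ, 0 ≤ A₁' ∧ 0 ≤ A₂' ∧ A₁' + A₂' = μ ∧
      -(a₁ / a₂) * μ + M₂ / 2 ≤ -(2 * A₂') ∧ b₁ / b₂ * μ - M₂ / 2 < A₁' ∧
      M₁ < A₂' - 2 * A₁') :
    ∃ C₃ > (0:ℝ), ∃ C₄ > (0:ℝ), ∃ C₅ > (0:ℝ),
      ∀ u ux uxx ut : ℝ → ℝ → ℝ,
        (∀ t ≥ (0:ℝ), ∀ x ∈ Icc (0:ℝ) 1, HasDerivWithinAt (u t) (ux t x) (Icc 0 1) x) →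
        (∀ t ≥ (0:ℝ), ∀ x ∈ Icc (0:ℝ) 1, HasDerivWithinAt (ux t) (uxx t x) (Icc 0 1) x) →
        (∀ t ≥ (0:ℝ), ContinuousOn (uxx t) (Icc (0:ℝ) 1)) →
        (∀ t > (0:ℝ), ∀ x ∈ Icc (0:ℝ) 1, HasDerivAt (fun s => u s x) (ut t x) t) →
        (∀ t > (0:ℝ), ∀ x ∈ Ioo (0:ℝ) 1,
          ut t x = μ * uxx t x + d t x + M₁ * u t x + M₂ * ux t x) →
        (∀ t ≥ (0:ℝ), a₁ * u t 1 + a₂ * ux t 1 = 0) →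
        (∀ t ≥ (0:ℝ), b₁ * u t 0 + b₂ * ux t 0 = d₁ t) →
        ContinuousOn (fun t => ∫ x in (0:ℝ)..1, (u t x) ^ 2) (Ici 0) →
        (∀ t > (0:ℝ), HasDerivAt (fun s => ∫ x in (0:ℝ)..1, (u s x) ^ 2)
          (∫ x in (0:ℝ)..1, 2 * u t x * ut t x) t) →
        ∀ t ≥ (0:ℝ),
          ((∫ x in (0:ℝ)..1, (u t x) ^ 2) ≤
            (∫ x in (0:ℝ)..1, (u 0 x) ^ 2) * Real.exp (-C₃ * t)
              + C₄ * (∫ s in (0:ℝ)..t, (d₁ s) ^ 2)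
              + C₅ * (∫ s in (0:ℝ)..t, (d₂ s) ^ 2)) ∧
          ((∫ x in (0:ℝ)..1, (u t x) ^ 2) ≤
            (∫ x in (0:ℝ)..1, (u 0 x) ^ 2) * Real.exp (-C₃ * t)
              + (1 - Real.exp (-C₃ * t)) *
                (C₄ * sSup ((fun s => (d₁ s) ^ 2) '' Icc 0 t)
                  + C₅ * sSup ((fun s => (d₂ s) ^ 2) '' Icc 0 t))) := by
  obtain ⟨A₁, A₂, hA₁, hA₂, hA, ha, hb, hM⟩ := hA'
  have hδ : 0 < 2 * (A₁ - (b₁ / b₂ * μ - M₂ / 2)) := by linarith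
  have hη : 0 < 2 * (A₂ - 2 * A₁ - M₁) := by linarith
  set δ := 2 * (A₁ - (b₁ / b₂ * μ - M₂ / 2))
  set η := 2 * (A₂ - 2 * A₁ - M₁)
  refine ⟨η / 2, by positivity, μ ^ 2 / (δ * b₂ ^ 2) * (1 + 1 / (η / 2)), by positivity,
    2 / η * (1 + 1 / (η / 2)), by positivity, ?_⟩
  intro u ux uxx ut hu hux huxx _ hpde hbc₁ hbc₀ hE hE' t ht
  refine le_of_hasDerivAt_le_add_sq (by positivity) (by positivity) (by positivity) ht hE hE'
    (fun τ hτ => ?_) hd₁.continuousOn hd₂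
  have hdτ : ContinuousOn (d τ) (Icc 0 1) :=
    hdcont.comp (continuous_const.prodMk continuous_id).continuousOn fun x hx => ⟨hτ.le, hx⟩
  refine (integral_congr_Ioo_of_le zero_le_one fun x hx =>
    congrArg (2 * u τ x * ·) (hpde τ hτ x hx)).trans_le ?_
  refine (energy_derivative_le ha₂ hb₂ hA₁ hA₂ hA ha hδ le_rfl hη le_rfl (hu τ hτ.le)
    (hux τ hτ.le) (huxx τ hτ.le) hdτ (hd τ hτ.le) (hbc₁ τ hτ.le) (hbc₀ τ hτ.le)).trans_eq ?_
  rw [sq_abs]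
  ring
end

section
/- Consider the real Ginzburg–Landau equation u_t = μ·u_xx + α·u − β·u³ on (0,1) with μ > 0, β > 0, α < 0, under boundary conditions u(t,1) = 0 and b₁·u(t,0) + b₂·u_x(t,0) = d(t), where b₂ ≠ 0 and b₁/b₂ < 1/3. Then there exist constants C₀, C₁ > 0 such that every classical solution u satisfies, for all t ≥ 0: ∫_0^1 u(t,x)² dx ≤ (∫_0^1 u(0,x)² dx)·e^{−C₀t} + C₁·∫_0^t d(s)² ds, and ∫_0^1 u(t,x)² dx ≤ (∫_0^1 u(0,x)² dx)·e^{−C₀t} + (1 − e^{−C₀t})·C₁·sup_{0≤s≤t} d(s)². -/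
open Set intervalIntegral Real

/-!
Multiplying the equation by `u` and integrating by parts, the energy `E t = ∫ u(t)²` satisfies
`E' = -2μ ∫ u_x² - 2μ u(0) u_x(0) + 2α E - 2β ∫ u⁴`. The Robin condition turns the boundary
flux into `2μ (ρ u(0)² - u(0) d/b₂)` with `ρ = b₁/b₂`; since `u(1) = 0` we have
`u(0)² ≤ ∫ u_x²`, and as `ρ < 1` Young's inequality absorbs the flux, leaving
`E' ≤ 2α E + K d²`. Both estimates then follow from this differential inequality with the
decay rate `C₀ = -2α > 0`, by the variation-of-constants formula.
-/

section Gronwall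

variable {E E' g : ℝ → ℝ} {C t : ℝ}

theorem le_exp_mul_add_integral_of_hasDerivAt_le (ht : 0 ≤ t)
    (hE : ContinuousOn E (Icc 0 t)) (hg : ContinuousOn g (Icc 0 t))
    (hE' : ∀ s ∈ Ioo 0 t, HasDerivAt E (E' s) s)
    (hbound : ∀ s ∈ Ioo 0 t, E' s ≤ -C * E s + g s) :
    E t ≤ E 0 * exp (-C * t) + ∫ s in 0..t, exp (-C * (t - s)) * g s := by
  set f : ℝ → ℝ := fun s => exp (C * s) * g s
  have hexp : Continuous fun s : ℝ => exp (C * s) := by fun_prop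
  have hf : ContinuousOn f (Icc 0 t) := hexp.continuousOn.mul hg
  set H : ℝ → ℝ := fun s => exp (C * s) * E s - ∫ r in 0..s, f r
  have hH : ContinuousOn H (Icc 0 t) := by
    refine (hexp.continuousOn.mul hE).sub ?_
    have := continuousOn_primitive_interval (a := 0) (b := t) (μ := MeasureTheory.volume)
      (by rw [uIcc_of_le ht]; exact hf.integrableOn_Icc)
    rwa [uIcc_of_le ht] at this
  have hH' : ∀ s ∈ Ioo 0 t,
      HasDerivAt H (exp (C * s) * (C * E s + E' s) - f s) s := by
    intro s hs
    have hexp' : HasDerivAt (fun s => exp (C * s)) (exp (C * s) * C) s := by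
      simpa using ((hasDerivAt_id s).const_mul C).exp
    have hprim : HasDerivAt (fun s => ∫ r in 0..s, f r) (f s) s :=
      integral_hasDerivAt_right ((hf.mono (Icc_subset_Icc le_rfl hs.2.le)).intervalIntegrable_of_Icc
        hs.1.le) ((hf.mono Ioo_subset_Icc_self).stronglyMeasurableAtFilter isOpen_Ioo s hs)
        (hf.continuousAt (Icc_mem_nhds hs.1 hs.2))
    have h := (hexp'.mul (hE' s hs)).sub hprim
    exact h.congr_deriv (by ring)
  have hanti : AntitoneOn H (Icc 0 t) := by
    refine antitoneOn_of_hasDerivWithinAt_nonpos (convex_Icc 0 t) hH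
      (f' := fun s => exp (C * s) * (C * E s + E' s) - f s)
      (fun s hs => ?_) (fun s hs => ?_) <;> rw [interior_Icc] at hs
    · exact (hH' s hs).hasDerivWithinAt
    · have := mul_le_mul_of_nonneg_left (hbound s hs) (exp_pos (C * s)).le
      simp only [f]
      linarith
  have hHt : H t ≤ H 0 := hanti (left_mem_Icc.2 ht) (right_mem_Icc.2 ht) ht
  have hkernel : exp (-C * t) * ∫ r in 0..t, f r = ∫ s in 0..t, exp (-C * (t - s)) * g s := by
    rw [← integral_const_mul]
    congr 1 with s
    rw [← mul_assoc, ← exp_add, show -C * t + C * s = -C * (t - s) by ring]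
  have hexp_t : exp (-C * t) * exp (C * t) = 1 := by rw [← exp_add]; simp
  simp only [H, mul_zero, exp_zero, one_mul, integral_same, sub_zero] at hHt
  have := mul_le_mul_of_nonneg_left hHt (exp_pos (-C * t)).le
  rw [mul_sub, ← mul_assoc, hexp_t, hkernel] at this
  linarith

theorem le_exp_mul_add_integral_of_hasDerivAt_le_of_nonneg (hC : 0 ≤ C) (ht : 0 ≤ t)
    (hE : ContinuousOn E (Icc 0 t)) (hg : ContinuousOn g (Icc 0 t))
    (hg₀ : ∀ s ∈ Icc 0 t, 0 ≤ g s)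
    (hE' : ∀ s ∈ Ioo 0 t, HasDerivAt E (E' s) s)
    (hbound : ∀ s ∈ Ioo 0 t, E' s ≤ -C * E s + g s) :
    E t ≤ E 0 * exp (-C * t) + ∫ s in 0..t, g s := by
  refine (le_exp_mul_add_integral_of_hasDerivAt_le ht hE hg hE' hbound).trans
    (add_le_add_right (integral_mono_on ht ?_ (hg.intervalIntegrable_of_Icc ht) fun s hs => ?_) _)
  · exact ((by fun_prop : Continuous fun s => exp (-C * (t - s))).continuousOn.mul
      hg).intervalIntegrable_of_Icc ht
  · refine mul_le_of_le_one_left (hg₀ s hs) (exp_le_one_iff.2 ?_)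
    nlinarith [hs.2]

theorem le_exp_mul_add_of_hasDerivAt_le_const (hC : 0 < C) (ht : 0 ≤ t) {M : ℝ}
    (hE : ContinuousOn E (Icc 0 t))
    (hE' : ∀ s ∈ Ioo 0 t, HasDerivAt E (E' s) s)
    (hbound : ∀ s ∈ Ioo 0 t, E' s ≤ -C * E s + M) :
    E t ≤ E 0 * exp (-C * t) + (1 - exp (-C * t)) * (M / C) := by
  have hkernel : ∫ s in 0..t, exp (-C * (t - s)) * M = (1 - exp (-C * t)) * (M / C) := by
    rw [integral_eq_sub_of_hasDerivAt (f := fun s => exp (-C * (t - s)) * (M / C))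
      (fun s _ => ?_)
      ((by fun_prop : Continuous fun s => exp (-C * (t - s)) * M).intervalIntegrable _ _)]
    · simp only [sub_self, mul_zero, exp_zero, sub_zero, one_mul]
      ring
    · have h := (((hasDerivAt_id' s).const_sub t).const_mul (-C)).exp.mul_const (M / C)
      exact h.congr_deriv (by field_simp)
  rw [← hkernel]
  exact le_exp_mul_add_integral_of_hasDerivAt_le ht hE continuousOn_const hE' hbound

end Gronwall

section UnitInterval

variable {u ux uxx : ℝ → ℝ}

theorem hasDerivWithinAt_Ioi_of_Icc
    (hux : ∀ x ∈ Icc (0:ℝ) 1, HasDerivWithinAt u (ux x) (Icc 0 1) x) {x : ℝ}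
    (hx : x ∈ Ioo 0 1) : HasDerivWithinAt u (ux x) (Ioi x) x :=
  ((hux x (Ioo_subset_Icc_self hx)).hasDerivAt (Icc_mem_nhds hx.1 hx.2)).hasDerivWithinAt

theorem sq_integral_le_integral_sq (hu : ContinuousOn u (Icc 0 1)) :
    (∫ x in 0..1, u x) ^ 2 ≤ ∫ x in 0..1, u x ^ 2 := by
  set I := ∫ x in 0..1, u x
  have hint : IntervalIntegrable u MeasureTheory.volume 0 1 :=
    hu.intervalIntegrable_of_Icc zero_le_one
  have hint2 : IntervalIntegrable (fun x => u x ^ 2) MeasureTheory.volume 0 1 :=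
    (hu.pow 2).intervalIntegrable_of_Icc zero_le_one
  have hvar : ∫ x in 0..1, (u x - I) ^ 2 = (∫ x in 0..1, u x ^ 2) - I ^ 2 := by
    simp only [sub_sq, mul_assoc]
    rw [integral_add (hint2.sub (hint.mul_const I |>.const_mul 2)) intervalIntegrable_const,
      integral_sub hint2 (hint.mul_const I |>.const_mul 2), integral_const_mul, integral_mul_const]
    simp
    ring
  have hnonneg : 0 ≤ ∫ x in 0..1, (u x - I) ^ 2 :=
    integral_nonneg zero_le_one fun _ _ => sq_nonneg _
  linarith

theorem sq_le_integral_deriv_sq_of_eq_zero_at_one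
    (hux : ∀ x ∈ Icc (0:ℝ) 1, HasDerivWithinAt u (ux x) (Icc 0 1) x)
    (hux_cont : ContinuousOn ux (Icc 0 1)) (h1 : u 1 = 0) :
    u 0 ^ 2 ≤ ∫ x in 0..1, ux x ^ 2 := by
  have hftc : ∫ x in 0..1, ux x = - u 0 := by
    rw [integral_eq_sub_of_hasDeriv_right_of_le zero_le_one
      (fun x hx => (hux x hx).continuousWithinAt) (fun _ => hasDerivWithinAt_Ioi_of_Icc hux)
      (hux_cont.intervalIntegrable_of_Icc zero_le_one), h1, zero_sub]
  simpa [hftc] using sq_integral_le_integral_sq hux_cont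

theorem integral_mul_second_deriv_of_eq_zero_at_one
    (hux : ∀ x ∈ Icc (0:ℝ) 1, HasDerivWithinAt u (ux x) (Icc 0 1) x)
    (huxx : ∀ x ∈ Icc (0:ℝ) 1, HasDerivWithinAt ux (uxx x) (Icc 0 1) x)
    (huxx_cont : ContinuousOn uxx (Icc 0 1)) (h1 : u 1 = 0) :
    ∫ x in 0..1, u x * uxx x = -(u 0 * ux 0) - ∫ x in 0..1, ux x ^ 2 := by
  have hu_cont : ContinuousOn u (Icc 0 1) := fun x hx => (hux x hx).continuousWithinAt
  have hux_cont : ContinuousOn ux (Icc 0 1) := fun x hx => (huxx x hx).continuousWithinAt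
  rw [integral_mul_deriv_eq_deriv_mul_of_hasDeriv_right (u' := ux)
    (by rwa [uIcc_of_le zero_le_one]) (by rwa [uIcc_of_le zero_le_one])
    (fun x hx => hasDerivWithinAt_Ioi_of_Icc hux (by simpa using hx))
    (fun x hx => hasDerivWithinAt_Ioi_of_Icc huxx (by simpa using hx))
    (hux_cont.intervalIntegrable_of_Icc zero_le_one)
    (huxx_cont.intervalIntegrable_of_Icc zero_le_one), h1]
  simp [sq]

theorem ginzburgLandau_energy_deriv_le {μ α β ρ y : ℝ} {ut : ℝ → ℝ}
    (hμ : 0 ≤ μ) (hβ : 0 ≤ β) (hρ : ρ < 1)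
    (hux : ∀ x ∈ Icc (0:ℝ) 1, HasDerivWithinAt u (ux x) (Icc 0 1) x)
    (huxx : ∀ x ∈ Icc (0:ℝ) 1, HasDerivWithinAt ux (uxx x) (Icc 0 1) x)
    (huxx_cont : ContinuousOn uxx (Icc 0 1))
    (hpde : ∀ x ∈ Ioo (0:ℝ) 1, ut x = μ * uxx x + α * u x - β * u x ^ 3)
    (h1 : u 1 = 0) (h0 : ux 0 + ρ * u 0 = y) :
    ∫ x in 0..1, 2 * u x * ut x ≤
      2 * α * (∫ x in 0..1, u x ^ 2) + μ / (2 * (1 - ρ)) * y ^ 2 := by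
  have hu_cont : ContinuousOn u (Icc 0 1) := fun x hx => (hux x hx).continuousWithinAt
  have hux_cont : ContinuousOn ux (Icc 0 1) := fun x hx => (huxx x hx).continuousWithinAt
  have i_uuxx : IntervalIntegrable (fun x => u x * uxx x) MeasureTheory.volume 0 1 :=
    (hu_cont.mul huxx_cont).intervalIntegrable_of_Icc zero_le_one
  have i_u2 : IntervalIntegrable (fun x => u x ^ 2) MeasureTheory.volume 0 1 :=
    (hu_cont.pow 2).intervalIntegrable_of_Icc zero_le_one
  have i_u4 : IntervalIntegrable (fun x => u x ^ 4) MeasureTheory.volume 0 1 :=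
    (hu_cont.pow 4).intervalIntegrable_of_Icc zero_le_one
  have hsubst : ∫ x in 0..1, 2 * u x * ut x =
      ∫ x in 0..1, (2 * μ * (u x * uxx x) + 2 * α * u x ^ 2 - 2 * β * u x ^ 4) := by
    simp only [integral_of_le zero_le_one, MeasureTheory.integral_Ioc_eq_integral_Ioo]
    refine MeasureTheory.setIntegral_congr_fun measurableSet_Ioo fun x hx => ?_
    rw [hpde x hx]
    ring
  have hsplit : ∫ x in 0..1, (2 * μ * (u x * uxx x) + 2 * α * u x ^ 2 - 2 * β * u x ^ 4) =
      2 * μ * (∫ x in 0..1, u x * uxx x) + 2 * α * (∫ x in 0..1, u x ^ 2)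
        - 2 * β * ∫ x in 0..1, u x ^ 4 := by
    rw [integral_sub ((i_uuxx.const_mul _).add (i_u2.const_mul _)) (i_u4.const_mul _),
      integral_add (i_uuxx.const_mul _) (i_u2.const_mul _), integral_const_mul,
      integral_const_mul, integral_const_mul]
  have hibp := integral_mul_second_deriv_of_eq_zero_at_one hux huxx huxx_cont h1
  have htrace := sq_le_integral_deriv_sq_of_eq_zero_at_one hux hux_cont h1
  have hquartic : 0 ≤ ∫ x in 0..1, u x ^ 4 :=
    integral_nonneg zero_le_one fun x _ => by positivity
  have hyoung : 2 * ((ρ - 1) * u 0 ^ 2 - u 0 * y) ≤ y ^ 2 / (2 * (1 - ρ)) := by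
    rw [le_div_iff₀ (by linarith)]
    nlinarith [sq_nonneg (2 * (1 - ρ) * u 0 + y)]
  have hflux : 2 * μ * (∫ x in 0..1, u x * uxx x) ≤ μ * (y ^ 2 / (2 * (1 - ρ))) := by
    rw [hibp, show ux 0 = y - ρ * u 0 by linarith]
    nlinarith [mul_le_mul_of_nonneg_left hyoung hμ, mul_le_mul_of_nonneg_left htrace hμ]
  rw [hsubst, hsplit, div_mul_comm, mul_comm _ μ]
  linarith [mul_nonneg hβ hquartic]

theorem ginzburgLandau_energy_deriv_le_of_robin {μ α β b₁ b₂ d : ℝ} {ut : ℝ → ℝ}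
    (hμ : 0 ≤ μ) (hβ : 0 ≤ β) (hb₂ : b₂ ≠ 0) (hb : b₁ / b₂ < 1)
    (hux : ∀ x ∈ Icc (0:ℝ) 1, HasDerivWithinAt u (ux x) (Icc 0 1) x)
    (huxx : ∀ x ∈ Icc (0:ℝ) 1, HasDerivWithinAt ux (uxx x) (Icc 0 1) x)
    (huxx_cont : ContinuousOn uxx (Icc 0 1))
    (hpde : ∀ x ∈ Ioo (0:ℝ) 1, ut x = μ * uxx x + α * u x - β * u x ^ 3)
    (h1 : u 1 = 0) (h0 : b₁ * u 0 + b₂ * ux 0 = d) :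
    ∫ x in 0..1, 2 * u x * ut x ≤
      -(-2 * α) * (∫ x in 0..1, u x ^ 2) + μ / (2 * (1 - b₁ / b₂)) / b₂ ^ 2 * d ^ 2 := by
  have hrobin : ux 0 + b₁ / b₂ * u 0 = d / b₂ := by
    field_simp
    linarith
  convert ginzburgLandau_energy_deriv_le hμ hβ hb hux huxx huxx_cont hpde h1 hrobin using 2 <;>
    ring

end UnitInterval

theorem stmt_17
    (μ α β b₁ b₂ : ℝ) (d : ℝ → ℝ)
    (hμ : 0 < μ) (hβ : 0 < β) (hα : α < 0)
    (hb₂ : b₂ ≠ 0) (hb : b₁ / b₂ < 1 / 3)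
    (hd : ContDiffOn ℝ 2 d (Ici 0)) :
    ∃ C₀ > (0:ℝ), ∃ C₁ > (0:ℝ),
      ∀ u ux uxx ut : ℝ → ℝ → ℝ,
        (∀ t ≥ (0:ℝ), ∀ x ∈ Icc (0:ℝ) 1, HasDerivWithinAt (u t) (ux t x) (Icc 0 1) x) →
        (∀ t ≥ (0:ℝ), ∀ x ∈ Icc (0:ℝ) 1, HasDerivWithinAt (ux t) (uxx t x) (Icc 0 1) x) →
        (∀ t ≥ (0:ℝ), ContinuousOn (uxx t) (Icc (0:ℝ) 1)) →
        (∀ t > (0:ℝ), ∀ x ∈ Icc (0:ℝ) 1, HasDerivAt (fun s => u s x) (ut t x) t) →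
        (∀ t > (0:ℝ), ∀ x ∈ Ioo (0:ℝ) 1,
          ut t x = μ * uxx t x + α * u t x - β * (u t x) ^ 3) →
        (∀ t ≥ (0:ℝ), u t 1 = 0) →
        (∀ t ≥ (0:ℝ), b₁ * u t 0 + b₂ * ux t 0 = d t) →
        ContinuousOn (fun t => ∫ x in (0:ℝ)..1, (u t x) ^ 2) (Ici 0) →
        (∀ t > (0:ℝ), HasDerivAt (fun s => ∫ x in (0:ℝ)..1, (u s x) ^ 2)
          (∫ x in (0:ℝ)..1, 2 * u t x * ut t x) t) →
        ∀ t ≥ (0:ℝ),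
          ((∫ x in (0:ℝ)..1, (u t x) ^ 2) ≤
            (∫ x in (0:ℝ)..1, (u 0 x) ^ 2) * Real.exp (-C₀ * t)
              + C₁ * (∫ s in (0:ℝ)..t, (d s) ^ 2)) ∧
          ((∫ x in (0:ℝ)..1, (u t x) ^ 2) ≤
            (∫ x in (0:ℝ)..1, (u 0 x) ^ 2) * Real.exp (-C₀ * t)
              + (1 - Real.exp (-C₀ * t)) * (C₁ * sSup ((fun s => (d s) ^ 2) '' Icc 0 t))) := by
  have hρ : b₁ / b₂ < 1 := by linarith
  have hC₀ : 0 < -2 * α := by linarith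
  set K := μ / (2 * (1 - b₁ / b₂)) / b₂ ^ 2
  have hK : 0 < K := div_pos (div_pos hμ (by linarith)) (by positivity)
  refine ⟨-2 * α, hC₀, K + K / (-2 * α), add_pos hK (div_pos hK hC₀), ?_⟩
  intro u ux uxx ut hux huxx huxx_cont _ hpde h1 h0 hE_cont hE_deriv t ht
  have hbound (s : ℝ) (hs : s ∈ Ioo 0 t) := ginzburgLandau_energy_deriv_le_of_robin
    hμ.le hβ.le hb₂ hρ (hux s hs.1.le) (huxx s hs.1.le) (huxx_cont s hs.1.le) (hpde s hs.1)
    (h1 s hs.1.le) (h0 s hs.1.le)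
  have hE_cont_Icc : ContinuousOn _ (Icc 0 t) := hE_cont.mono Icc_subset_Ici_self
  have hE_deriv_Ioo : ∀ s ∈ Ioo 0 t, HasDerivAt _ _ s := fun s hs => hE_deriv s hs.1
  have hd_cont : ContinuousOn (fun s => d s ^ 2) (Icc 0 t) :=
    (hd.continuousOn.mono Icc_subset_Ici_self).pow 2
  constructor
  · have := le_exp_mul_add_integral_of_hasDerivAt_le_of_nonneg (g := fun s => K * d s ^ 2)
      hC₀.le ht hE_cont_Icc (continuousOn_const.mul hd_cont)
      (fun s _ => mul_nonneg hK.le (sq_nonneg _)) hE_deriv_Ioo hbound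
    rw [integral_const_mul] at this
    refine this.trans (add_le_add le_rfl (mul_le_mul_of_nonneg_right ?_ ?_))
    · linarith [div_pos hK hC₀]
    · exact integral_nonneg ht fun s _ => sq_nonneg _
  · set S := sSup ((fun s => d s ^ 2) '' Icc 0 t)
    have hS : ∀ s ∈ Icc 0 t, d s ^ 2 ≤ S := fun s hs => hd_cont.le_sSup_image_Icc hs
    have hS₀ : 0 ≤ S := (sq_nonneg _).trans (hS 0 (left_mem_Icc.2 ht))
    have := le_exp_mul_add_of_hasDerivAt_le_const hC₀ ht hE_cont_Icc hE_deriv_Ioo fun s hs =>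
      (hbound s hs).trans (add_le_add le_rfl (mul_le_mul_of_nonneg_left
        (hS s (Ioo_subset_Icc_self hs)) hK.le))
    refine this.trans (add_le_add le_rfl (mul_le_mul_of_nonneg_left ?_ ?_))
    · rw [mul_div_right_comm, add_mul]
      linarith [mul_nonneg hK.le hS₀]
    · rw [sub_nonneg, exp_le_one_iff]
      nlinarith
end

section
/- Consider the generalized real Ginzburg–Landau equation u_t = μ·u_xx + α·u − β·u³ − γ·u⁵ + λ·u_x on (0,1) with μ > 0, β > 0, γ > 0, λ ∈ ℝ, α + |λ| < 0, |λ| ≤ μ, under boundary conditions u(t,1) = 0 and b₁·u(t,0) + b₂·u_x(t,0) = d(t), where b₂ ≠ 0 and b₁/b₂ < 1/4. Then there exist constants C₀, C₁ > 0 such that every classical solution u satisfies, for all t ≥ 0: ∫_0^1 u(t,x)² dx ≤ (∫_0^1 u(0,x)² dx)·e^{−C₀t} + C₁·∫_0^t d(s)² ds, and ∫_0^1 u(t,x)² dx ≤ (∫_0^1 u(0,x)² dx)·e^{−C₀t} + (1 − e^{−C₀t})·C₁·sup_{0≤s≤t} d(s)². -/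
/-!
Multiplying the equation by `2u` and integrating by parts in `x` (using `u(t,1) = 0`) gives
`V' = 2αV - 2β∫u⁴ - 2γ∫u⁶ - 2μ∫u_x² - 2μ u(0) u_x(0) - λ u(0)²` for `V(t) = ∫₀¹ u(t,x)² dx`.
Writing `u_x(0) = (d - b₁u(0)) / b₂`, Young's inequality turns the boundary terms into
`C d(t)²` with `C = μ / ((1/4 - b₁/b₂) b₂²)` plus a multiple `(μ/2 - μθ - λ) u(0)²`
(`θ = 1/4 - b₁/b₂ > 0`), and that multiple is absorbed by `2μ∫u_x²` through the Poincaré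
inequality `u(0)² ≤ ∫₀¹ u_x²` because `|λ| ≤ μ`. Hence `V' ≤ 2αV + C d²` with `α < 0`, and
Gronwall's inequality with integrating factor `e^{-2αt}` yields both estimates with `C₀ = -2α`.
-/

open Set intervalIntegral Real

section IntegrationByParts

variable {f f' f'' : ℝ → ℝ} {a b : ℝ}

theorem integral_mul_deriv_eq_neg_sq_div_two (hab : a ≤ b)
    (hf : ∀ x ∈ Icc a b, HasDerivWithinAt f (f' x) (Icc a b) x)
    (hf' : ContinuousOn f' (Icc a b)) (hfb : f b = 0) :
    ∫ x in a..b, f x * f' x = -f a ^ 2 / 2 := by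
  rw [← uIcc_of_le hab] at hf hf'
  have hparts := integral_mul_deriv_eq_deriv_mul_of_hasDerivWithinAt hf hf
    hf'.intervalIntegrable hf'.intervalIntegrable
  simp_rw [mul_comm (f' _)] at hparts
  rw [hfb] at hparts
  linarith

theorem integral_mul_deriv_deriv_eq (hab : a ≤ b)
    (hf : ∀ x ∈ Icc a b, HasDerivWithinAt f (f' x) (Icc a b) x)
    (hf' : ∀ x ∈ Icc a b, HasDerivWithinAt f' (f'' x) (Icc a b) x)
    (hf'' : ContinuousOn f'' (Icc a b)) (hfb : f b = 0) :
    ∫ x in a..b, f x * f'' x = -(f a * f' a) - ∫ x in a..b, f' x ^ 2 := by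
  have hf'c : ContinuousOn f' (Icc a b) := fun x hx => (hf' x hx).continuousWithinAt
  rw [← uIcc_of_le hab] at hf hf' hf'' hf'c
  rw [integral_mul_deriv_eq_deriv_mul_of_hasDerivWithinAt hf hf'
    hf'c.intervalIntegrable hf''.intervalIntegrable, hfb]
  simp [sq]

theorem sq_le_mul_integral_deriv_sq (hab : a ≤ b)
    (hf : ∀ x ∈ Icc a b, HasDerivWithinAt f (f' x) (Icc a b) x)
    (hf' : ContinuousOn f' (Icc a b)) (hfb : f b = 0) :
    f a ^ 2 ≤ (b - a) * ∫ x in a..b, f' x ^ 2 := by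
  rcases hab.eq_or_lt with rfl | hlt
  · simp [hfb]
  have hf'i : IntervalIntegrable f' MeasureTheory.volume a b :=
    hf'.intervalIntegrable_of_Icc hab
  have hftc : ∫ x in a..b, f' x = -f a := by
    rw [integral_eq_sub_of_hasDeriv_right_of_le hab (fun x hx => (hf x hx).continuousWithinAt)
      (fun x hx => ((hf x (Ioo_subset_Icc_self hx)).hasDerivAt
        (Icc_mem_nhds hx.1 hx.2)).hasDerivWithinAt) hf'i, hfb, zero_sub]
  -- Cauchy–Schwarz for `∫ f' = -f a`, in the form `0 ≤ ∫ ((b - a) f' + f a)²`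
  have hnonneg : 0 ≤ ∫ x in a..b, ((b - a) * f' x + f a) ^ 2 :=
    integral_nonneg hab fun _ _ => sq_nonneg _
  have hexpand : ∫ x in a..b, ((b - a) * f' x + f a) ^ 2 =
      (b - a) ^ 2 * (∫ x in a..b, f' x ^ 2) - (b - a) * f a ^ 2 := by
    have hsq : IntervalIntegrable (fun x => f' x ^ 2) MeasureTheory.volume a b :=
      (hf'.pow 2).intervalIntegrable_of_Icc hab
    rw [integral_congr
        (g := fun x => (b - a) ^ 2 * f' x ^ 2 + 2 * (b - a) * f a * f' x + f a ^ 2)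
        fun x _ => by ring,
      integral_add ((hsq.const_mul _).add (hf'i.const_mul _)) intervalIntegrable_const,
      integral_add (hsq.const_mul _) (hf'i.const_mul _)]
    simp only [integral_const_mul, integral_const, hftc, smul_eq_mul]
    ring
  have hprod : 0 ≤ (b - a) * ((b - a) * (∫ x in a..b, f' x ^ 2) - f a ^ 2) := by
    rw [hexpand] at hnonneg
    linear_combination hnonneg
  linarith [(mul_nonneg_iff_of_pos_left (sub_pos.2 hlt)).1 hprod]

end IntegrationByParts

theorem robin_boundary_terms_le {μ lam b₁ b₂ u₀ g₀ I : ℝ} (hμ : 0 ≤ μ)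
    (hlam : |lam| ≤ μ) (hb₂ : b₂ ≠ 0) (hb : b₁ / b₂ < 1 / 4) (hI : u₀ ^ 2 ≤ I) :
    -(2 * μ * (u₀ * g₀)) - 2 * μ * I - lam * u₀ ^ 2 ≤
      μ / ((1 / 4 - b₁ / b₂) * b₂ ^ 2) * (b₁ * u₀ + b₂ * g₀) ^ 2 := by
  set θ := 1 / 4 - b₁ / b₂
  set e := (b₁ * u₀ + b₂ * g₀) / b₂
  have hθ : 0 < θ := sub_pos.2 hb
  have hg₀ : g₀ = e - (1 / 4 - θ) * u₀ := by
    simp only [e, θ]; field_simp; ring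
  have hrhs : μ / (θ * b₂ ^ 2) * (b₁ * u₀ + b₂ * g₀) ^ 2 = μ / θ * e ^ 2 := by
    simp only [e]; field_simp
  -- Young's inequality `-2 μ u₀ e ≤ μ θ u₀² + (μ / θ) e²`
  have hyoung : 0 ≤ μ / θ * e ^ 2 + 2 * μ * u₀ * e + μ * θ * u₀ ^ 2 := by
    rw [show μ / θ * e ^ 2 + 2 * μ * u₀ * e + μ * θ * u₀ ^ 2 = μ / θ * (e + θ * u₀) ^ 2 by
      field_simp; ring]
    positivity
  have hcoeff : 0 ≤ 3 / 2 * μ + μ * θ + lam := by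
    linarith [neg_abs_le lam, mul_nonneg hμ hθ.le]
  rw [hrhs, hg₀]
  linarith [mul_nonneg hμ (sub_nonneg.2 hI), mul_nonneg hcoeff (sq_nonneg u₀)]

theorem integral_two_mul_le_of_ginzburgLandau {μ α β γ lam b₁ b₂ δ : ℝ} {f f' f'' w : ℝ → ℝ}
    (hμ : 0 ≤ μ) (hβ : 0 ≤ β) (hγ : 0 ≤ γ) (hlam : |lam| ≤ μ) (hb₂ : b₂ ≠ 0)
    (hb : b₁ / b₂ < 1 / 4)
    (hf : ∀ x ∈ Icc (0:ℝ) 1, HasDerivWithinAt f (f' x) (Icc 0 1) x)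
    (hf' : ∀ x ∈ Icc (0:ℝ) 1, HasDerivWithinAt f' (f'' x) (Icc 0 1) x)
    (hf'' : ContinuousOn f'' (Icc 0 1))
    (hw : ∀ x ∈ Ioo (0:ℝ) 1,
      w x = μ * f'' x + α * f x - β * f x ^ 3 - γ * f x ^ 5 + lam * f' x)
    (hf1 : f 1 = 0) (hf0 : b₁ * f 0 + b₂ * f' 0 = δ) :
    ∫ x in (0:ℝ)..1, 2 * f x * w x ≤
      2 * α * (∫ x in (0:ℝ)..1, f x ^ 2) + μ / ((1 / 4 - b₁ / b₂) * b₂ ^ 2) * δ ^ 2 := by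
  rw [integral_congr_Ioo_of_le zero_le_one fun x hx => congrArg (2 * f x * ·) (hw x hx),
    ← hf0]
  have hfc : ContinuousOn f (Icc 0 1) := fun x hx => (hf x hx).continuousWithinAt
  have hf'c : ContinuousOn f' (Icc 0 1) := fun x hx => (hf' x hx).continuousWithinAt
  have hI := sq_le_mul_integral_deriv_sq zero_le_one hf hf'c hf1
  rw [sub_zero, one_mul] at hI
  have hi {F : ℝ → ℝ} (hF : ContinuousOn F (Icc 0 1)) :
      IntervalIntegrable F MeasureTheory.volume 0 1 :=
    hF.intervalIntegrable_of_Icc zero_le_one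
  calc _ ≤ ∫ x in (0:ℝ)..1,
        2 * μ * (f x * f'' x) + 2 * α * f x ^ 2 + 2 * lam * (f x * f' x) := by
        refine integral_mono_on zero_le_one (hi (by fun_prop)) (hi (by fun_prop)) fun x _ => ?_
        linarith [mul_nonneg hβ (by positivity : 0 ≤ f x ^ 4),
          mul_nonneg hγ (by positivity : 0 ≤ f x ^ 6)]
    _ = 2 * μ * (∫ x in (0:ℝ)..1, f x * f'' x) + 2 * α * (∫ x in (0:ℝ)..1, f x ^ 2) +
          2 * lam * ∫ x in (0:ℝ)..1, f x * f' x := by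
        have hff'' := hi (F := fun x => f x * f'' x) (hfc.mul hf'')
        have hf2 := hi (F := fun x => f x ^ 2) (hfc.pow 2)
        have hff' := hi (F := fun x => f x * f' x) (hfc.mul hf'c)
        rw [integral_add ((hff''.const_mul _).add (hf2.const_mul _)) (hff'.const_mul _),
          integral_add (hff''.const_mul _) (hf2.const_mul _)]
        simp only [integral_const_mul]
    _ = 2 * α * (∫ x in (0:ℝ)..1, f x ^ 2) +
          (-(2 * μ * (f 0 * f' 0)) - 2 * μ * (∫ x in (0:ℝ)..1, f' x ^ 2) - lam * f 0 ^ 2) := by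
        rw [integral_mul_deriv_deriv_eq zero_le_one hf hf' hf'' hf1,
          integral_mul_deriv_eq_neg_sq_div_two zero_le_one hf hf'c hf1]
        ring
    _ ≤ _ := by linarith [robin_boundary_terms_le (g₀ := f' 0) hμ hlam hb₂ hb hI]

theorem le_mul_exp_add_integral_of_hasDerivAt_le {V V' g : ℝ → ℝ} {c a b : ℝ}
    (hab : a ≤ b) (hV : ContinuousOn V (Icc a b)) (hV' : ∀ s ∈ Ioo a b, HasDerivAt V (V' s) s)
    (hg : ContinuousOn g (Icc a b)) (hle : ∀ s ∈ Ioo a b, V' s ≤ -c * V s + g s) :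
    V b ≤ V a * exp (-c * (b - a)) + ∫ s in a..b, exp (-c * (b - s)) * g s := by
  set G : ℝ → ℝ := fun s => ∫ r in a..s, exp (c * r) * g r
  have hEg : ContinuousOn (fun r => exp (c * r) * g r) (Icc a b) := by fun_prop
  have hG : ContinuousOn G (Icc a b) := by
    simpa only [uIcc_of_le hab] using
      continuousOn_primitive_interval' (hEg.intervalIntegrable_of_Icc hab) left_mem_uIcc
  have hG' (s : ℝ) (hs : s ∈ Ioo a b) : HasDerivAt G (exp (c * s) * g s) s :=
    integral_hasDerivAt_right
      ((hEg.mono (Icc_subset_Icc_right hs.2.le)).intervalIntegrable_of_Icc hs.1.le)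
      ((hEg.mono Ioo_subset_Icc_self).stronglyMeasurableAtFilter isOpen_Ioo s hs)
      (hEg.continuousAt (Icc_mem_nhds hs.1 hs.2))
  have hanti : AntitoneOn (fun s => V s * exp (c * s) - G s) (Icc a b) := by
    refine antitoneOn_of_hasDerivWithinAt_nonpos (convex_Icc a b)
      ((hV.mul (by fun_prop)).sub hG) (f' := fun s => V' s * exp (c * s) +
        V s * (exp (c * s) * c) - exp (c * s) * g s) (fun s hs => ?_) fun s hs => ?_
    · rw [interior_Icc] at hs
      have hexp : HasDerivAt (fun s => exp (c * s)) (exp (c * s) * c) s := by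
        simpa using ((hasDerivAt_id s).const_mul c).exp
      exact (((hV' s hs).mul hexp).sub (hG' s hs)).hasDerivWithinAt
    · rw [interior_Icc] at hs
      nlinarith [mul_le_mul_of_nonneg_right (hle s hs) (exp_pos (c * s)).le]
  have hba := hanti (left_mem_Icc.2 hab) (right_mem_Icc.2 hab) hab
  simp only [G, integral_same, sub_zero] at hba
  have hGb : ∫ s in a..b, exp (-c * (b - s)) * g s = exp (-c * b) * G b := by
    rw [← integral_const_mul]
    refine integral_congr fun s _ => ?_
    simp only [← mul_assoc, ← exp_add]
    ring_nf
  calc V b = exp (-c * b) * (V b * exp (c * b)) := by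
        rw [mul_left_comm, ← exp_add]; simp
    _ ≤ exp (-c * b) * (V a * exp (c * a) + G b) :=
        mul_le_mul_of_nonneg_left (by linarith) (exp_pos _).le
    _ = V a * exp (-c * (b - a)) + ∫ s in a..b, exp (-c * (b - s)) * g s := by
        rw [hGb, mul_add, mul_left_comm, ← exp_add]; ring_nf

theorem integral_exp_neg_mul_sub {c : ℝ} (a b : ℝ) (hc : c ≠ 0) :
    ∫ s in a..b, exp (-c * (b - s)) = (1 - exp (-c * (b - a))) / c := by
  have hderiv (s : ℝ) : HasDerivAt (fun s => exp (-c * (b - s)) / c) (exp (-c * (b - s))) s := by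
    refine ((((hasDerivAt_id' s).const_sub b).const_mul (-c)).exp.div_const c).congr_deriv ?_
    field_simp
  rw [integral_eq_sub_of_hasDerivAt (fun s _ => hderiv s)
    (Continuous.intervalIntegrable (by fun_prop) a b)]
  simp [sub_div]

theorem le_mul_exp_add_integral_of_hasDerivAt_le_of_nonneg {V V' g : ℝ → ℝ} {c a b : ℝ}
    (hc : 0 ≤ c) (hab : a ≤ b) (hV : ContinuousOn V (Icc a b))
    (hV' : ∀ s ∈ Ioo a b, HasDerivAt V (V' s) s) (hg : ContinuousOn g (Icc a b))
    (hg₀ : ∀ s ∈ Icc a b, 0 ≤ g s) (hle : ∀ s ∈ Ioo a b, V' s ≤ -c * V s + g s) :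
    V b ≤ V a * exp (-c * (b - a)) + ∫ s in a..b, g s := by
  have hforced : ∫ s in a..b, exp (-c * (b - s)) * g s ≤ ∫ s in a..b, g s :=
    integral_mono_on hab ((ContinuousOn.mul (by fun_prop) hg).intervalIntegrable_of_Icc hab)
      (hg.intervalIntegrable_of_Icc hab) fun s hs =>
        mul_le_of_le_one_left (hg₀ s hs) (exp_le_one_iff.2 (by nlinarith [hs.2]))
  linarith [le_mul_exp_add_integral_of_hasDerivAt_le hab hV hV' hg hle]

theorem le_mul_exp_add_of_hasDerivAt_le_of_le {V V' g : ℝ → ℝ} {c a b M : ℝ}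
    (hc : 0 < c) (hab : a ≤ b) (hV : ContinuousOn V (Icc a b))
    (hV' : ∀ s ∈ Ioo a b, HasDerivAt V (V' s) s) (hg : ContinuousOn g (Icc a b))
    (hgM : ∀ s ∈ Icc a b, g s ≤ M) (hle : ∀ s ∈ Ioo a b, V' s ≤ -c * V s + g s) :
    V b ≤ V a * exp (-c * (b - a)) + (1 - exp (-c * (b - a))) * (M / c) := by
  have hforced :
      ∫ s in a..b, exp (-c * (b - s)) * g s ≤ ∫ s in a..b, exp (-c * (b - s)) * M :=
    integral_mono_on hab ((ContinuousOn.mul (by fun_prop) hg).intervalIntegrable_of_Icc hab)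
      (Continuous.intervalIntegrable (by fun_prop) a b)
      fun s hs => mul_le_mul_of_nonneg_left (hgM s hs) (exp_pos _).le
  rw [integral_mul_const, integral_exp_neg_mul_sub a b hc.ne', div_mul_eq_mul_div] at hforced
  rw [mul_div_assoc']
  linarith [le_mul_exp_add_integral_of_hasDerivAt_le hab hV hV' hg hle]

theorem stmt_18
    (μ α β γ lam b₁ b₂ : ℝ) (d : ℝ → ℝ)
    (hμ : 0 < μ) (hβ : 0 < β) (hγ : 0 < γ) (halam : α + |lam| < 0) (hlamμ : |lam| ≤ μ)
    (hb₂ : b₂ ≠ 0) (hb : b₁ / b₂ < 1 / 4)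
    (hd : ContDiffOn ℝ 2 d (Ici 0)) :
    ∃ C₀ > (0:ℝ), ∃ C₁ > (0:ℝ),
      ∀ u ux uxx ut : ℝ → ℝ → ℝ,
        (∀ t ≥ (0:ℝ), ∀ x ∈ Icc (0:ℝ) 1, HasDerivWithinAt (u t) (ux t x) (Icc 0 1) x) →
        (∀ t ≥ (0:ℝ), ∀ x ∈ Icc (0:ℝ) 1, HasDerivWithinAt (ux t) (uxx t x) (Icc 0 1) x) →
        (∀ t ≥ (0:ℝ), ContinuousOn (uxx t) (Icc (0:ℝ) 1)) →
        (∀ t > (0:ℝ), ∀ x ∈ Icc (0:ℝ) 1, HasDerivAt (fun s => u s x) (ut t x) t) →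
        (∀ t > (0:ℝ), ∀ x ∈ Ioo (0:ℝ) 1,
          ut t x = μ * uxx t x + α * u t x - β * (u t x) ^ 3 - γ * (u t x) ^ 5 + lam * ux t x) →
        (∀ t ≥ (0:ℝ), u t 1 = 0) →
        (∀ t ≥ (0:ℝ), b₁ * u t 0 + b₂ * ux t 0 = d t) →
        ContinuousOn (fun t => ∫ x in (0:ℝ)..1, (u t x) ^ 2) (Ici 0) →
        (∀ t > (0:ℝ), HasDerivAt (fun s => ∫ x in (0:ℝ)..1, (u s x) ^ 2)
          (∫ x in (0:ℝ)..1, 2 * u t x * ut t x) t) →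
        ∀ t ≥ (0:ℝ),
          ((∫ x in (0:ℝ)..1, (u t x) ^ 2) ≤
            (∫ x in (0:ℝ)..1, (u 0 x) ^ 2) * Real.exp (-C₀ * t)
              + C₁ * (∫ s in (0:ℝ)..t, (d s) ^ 2)) ∧
          ((∫ x in (0:ℝ)..1, (u t x) ^ 2) ≤
            (∫ x in (0:ℝ)..1, (u 0 x) ^ 2) * Real.exp (-C₀ * t)
              + (1 - Real.exp (-C₀ * t)) * (C₁ * sSup ((fun s => (d s) ^ 2) '' Icc 0 t))) := by
  set C := μ / ((1 / 4 - b₁ / b₂) * b₂ ^ 2)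
  set c := -(2 * α)
  have hC : 0 < C := div_pos hμ (mul_pos (by linarith) (by positivity))
  have hc : 0 < c := by linarith [abs_nonneg lam]
  refine ⟨c, hc, C + C / c, by positivity, ?_⟩
  intro u ux uxx ut hu hux huxx _ hpde hu1 hbc hVc hVd t ht
  have hd2 : ContinuousOn (fun s => d s ^ 2) (Icc 0 t) :=
    (hd.continuousOn.mono Icc_subset_Ici_self).pow 2
  have hforcing : ContinuousOn (fun s => C * d s ^ 2) (Icc 0 t) := continuousOn_const.mul hd2
  have henergy (s : ℝ) (hs : s ∈ Ioo 0 t) : ∫ x in (0:ℝ)..1, 2 * u s x * ut s x ≤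
      -c * (∫ x in (0:ℝ)..1, u s x ^ 2) + C * d s ^ 2 := by
    linarith [integral_two_mul_le_of_ginzburgLandau hμ.le hβ.le hγ.le hlamμ hb₂ hb (hu s hs.1.le)
      (hux s hs.1.le) (huxx s hs.1.le) (hpde s hs.1) (hu1 s hs.1.le) (hbc s hs.1.le)]
  have hV := hVc.mono (Icc_subset_Ici_self : Icc (0:ℝ) t ⊆ Ici 0)
  have hV' (s : ℝ) (hs : s ∈ Ioo 0 t) := hVd s hs.1
  have hS (s : ℝ) (hs : s ∈ Icc 0 t) : d s ^ 2 ≤ sSup ((fun s => d s ^ 2) '' Icc 0 t) :=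
    le_csSup (isCompact_Icc.image_of_continuousOn hd2).bddAbove (mem_image_of_mem _ hs)
  have hint := le_mul_exp_add_integral_of_hasDerivAt_le_of_nonneg hc.le ht hV hV' hforcing
    (fun s _ => by positivity) henergy
  have hsup := le_mul_exp_add_of_hasDerivAt_le_of_le hc ht hV hV' hforcing
    (fun s hs => mul_le_mul_of_nonneg_left (hS s hs) hC.le) henergy
  rw [sub_zero, integral_const_mul] at hint
  rw [sub_zero, mul_div_right_comm] at hsup
  refine ⟨hint.trans ?_, hsup.trans ?_⟩
  · gcongr
    · exact integral_nonneg ht fun s _ => sq_nonneg (d s)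
    · exact le_add_of_nonneg_right (by positivity)
  · gcongr
    · exact sub_nonneg.2 (exp_le_one_iff.2 (by nlinarith))
    · exact (sq_nonneg _).trans (hS 0 (left_mem_Icc.2 ht))
    · exact le_add_of_nonneg_left hC.le
end
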